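/- arXiv:2008.09888 — 5 statements merged into one kernel-verified Lean document; each statement's English description precedes it below -/
import Mathlib

section
/- If a digraph F is the disjoint union of two digraphs F₁ and F₂, then mader_χ⃗(F) ≤ mader_χ⃗(F₁) + mader_χ⃗(F₂). -/
/-- A digraph on a vertex type `V`: a set of arcs given by an adjacency relation. -/
structure Digraph' (V : Type) where
  Adj : V → V → Prop

namespace Digraph'

variable {V : Type}

/-- A digraph is loopless if it has no arc from a vertex to itself. -/
def Loopless (D : Digraph' V) : Prop := ∀ v, ¬ D.Adj v v

/-- A set `S` of vertices is acyclic in `D` if the subdigraph induced by `S`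
contains no directed cycle (equivalently, no vertex can reach itself by a
nontrivial directed walk staying inside `S`). -/
def AcyclicOn (D : Digraph' V) (S : Set V) : Prop :=
  ∀ v, ¬ Relation.TransGen (fun x y => x ∈ S ∧ y ∈ S ∧ D.Adj x y) v v

/-- An acyclic coloring of `D` with `k` colors: every color class induces an
acyclic subdigraph. -/
def IsAcyclicColoring (D : Digraph' V) {k : ℕ} (c : V → Fin k) : Prop :=
  ∀ i : Fin k, D.AcyclicOn {v | c v = i}

/-- The dichromatic number of `D`: the least `k` such that `D` admits an
acyclic coloring with `k` colors. -/
noncomputable def dichromaticNumber (D : Digraph' V) : ℕ :=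
  sInf {k : ℕ | ∃ c : V → Fin k, D.IsAcyclicColoring c}

/-- `D.IsDipath u l v`: the list `u :: l ++ [v]` is a directed path in `D`
from `u` to `v`, with (pairwise distinct) internal vertices `l`. -/
def IsDipath (D : Digraph' V) (u : V) (l : List V) (v : V) : Prop :=
  (u :: l ++ [v]).Chain' D.Adj ∧ (u :: l ++ [v]).Nodup

/-- `D.ContainsSubdivision F`: some subdigraph of `D` is a subdivision of `F`.
Concretely, there is an injective map `β` of the vertices of `F` into `D`
(the branch vertices), and for every arc `(a,b)` of `F` a directed path in
`D` from `β a` to `β b`, such that the internal vertices of these paths avoid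
all branch vertices and the paths of distinct arcs are internally disjoint. -/
def ContainsSubdivision {α : Type} (D : Digraph' V) (F : Digraph' α) : Prop :=
  ∃ (β : α → V) (p : ∀ a b, F.Adj a b → List V),
    Function.Injective β ∧
    (∀ a b (h : F.Adj a b), D.IsDipath (β a) (p a b h) (β b)) ∧
    (∀ a b (h : F.Adj a b) (x : V), x ∈ p a b h → x ∉ Set.range β) ∧
    (∀ a b (h : F.Adj a b) (a' b' : α) (h' : F.Adj a' b'),
      (a, b) ≠ (a', b') → ∀ x, x ∈ p a b h → x ∉ p a' b' h')

/-- `MaderBound F k`: every (finite, loopless) digraph with dichromatic number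
at least `k` contains a subdivision of `F`. -/
def MaderBound {α : Type} (F : Digraph' α) (k : ℕ) : Prop :=
  ∀ (n : ℕ) (D : Digraph' (Fin n)), D.Loopless →
    k ≤ D.dichromaticNumber → D.ContainsSubdivision F

/-- The dichromatic Mader number of `F`: the smallest integer `k ≥ 1` such that
every digraph with dichromatic number at least `k` contains a subdivision of `F`. -/
noncomputable def mader {α : Type} (F : Digraph' α) : ℕ :=
  sInf {k : ℕ | 1 ≤ k ∧ MaderBound F k}

/-- A digraph is strongly connected if every vertex can reach every other
vertex by a directed path. -/
def StronglyConnected (D : Digraph' V) : Prop :=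
  ∀ x y : V, Relation.ReflTransGen D.Adj x y

/-- The subdigraph of `D` induced by a set `S` of vertices. -/
def induce (D : Digraph' V) (S : Set V) : Digraph' S :=
  ⟨fun a b => D.Adj a.1 b.1⟩

end Digraph'

/-- `D` is an orientation of the undirected simple graph `G`: the arcs of `D`
are obtained by choosing exactly one direction for each edge of `G`. -/
def IsOrientationOf {γ : Type} (D : Digraph' γ) (G : SimpleGraph γ) : Prop :=
  (∀ a b, D.Adj a b → G.Adj a b) ∧
  (∀ a b, G.Adj a b → ((D.Adj a b ∨ D.Adj b a) ∧ ¬ (D.Adj a b ∧ D.Adj b a)))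


/-- The disjoint union of two digraphs. -/
def disjUnion {α β : Type} (F₁ : Digraph' α) (F₂ : Digraph' β) : Digraph' (α ⊕ β) :=
  ⟨fun x y =>
    match x, y with
    | .inl a, .inl b => F₁.Adj a b
    | .inr a, .inr b => F₂.Adj a b
    | _, _ => False⟩

namespace MaderAux

open Digraph'

variable {V W : Type}

lemma acyclicOn_mono (D : Digraph' V) {S T : Set V} (h : S ⊆ T)
    (hT : D.AcyclicOn T) : D.AcyclicOn S := fun v hv =>
  hT v (Relation.TransGen.mono (p := fun x y => x ∈ T ∧ y ∈ T ∧ D.Adj x y) (fun _ _ hxy => ⟨h hxy.1, h hxy.2.1, hxy.2.2⟩) v v hv)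

lemma acyclicOn_of_subsingleton (D : Digraph' V) (hD : D.Loopless) {S : Set V}
    (hS : S.Subsingleton) : D.AcyclicOn S := by
  intro v hv
  cases hv with
  | single h => exact hD v h.2.2
  | tail h₁ h₂ =>
    have hb : _ = v := hS h₂.1 h₂.2.1
    exact hD v (hb ▸ h₂.2.2)

lemma exists_coloring [Fintype V] (D : Digraph' V) (hD : D.Loopless) :
    ∃ c : V → Fin (Fintype.card V), D.IsAcyclicColoring c := by
  refine ⟨Fintype.equivFin V, fun i => acyclicOn_of_subsingleton D hD ?_⟩
  intro x hx y hy
  exact (Fintype.equivFin V).injective (hx.trans hy.symm)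

lemma exists_coloring_dichromatic [Fintype V] (D : Digraph' V) (hD : D.Loopless) :
    ∃ c : V → Fin D.dichromaticNumber, D.IsAcyclicColoring c := by
  have h : D.dichromaticNumber ∈ {k : ℕ | ∃ c : V → Fin k, D.IsAcyclicColoring c} :=
    Nat.sInf_mem ⟨Fintype.card V, exists_coloring D hD⟩
  exact h

lemma loopless_induce (D : Digraph' V) (hD : D.Loopless) (S : Set V) :
    (D.induce S).Loopless := fun v => hD v.1

lemma coloring_transfer (D : Digraph' V) (D' : Digraph' W) (e : W ≃ V)
    (he : ∀ a b, D'.Adj a b → D.Adj (e a) (e b)) {k : ℕ} (c : V → Fin k)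
    (hc : D.IsAcyclicColoring c) : D'.IsAcyclicColoring (c ∘ e) := by
  intro i v hv
  exact hc i (e v) (hv.lift e (fun a b hab => ⟨hab.1, hab.2.1, he a b hab.2.2⟩))

lemma dichromatic_le_of_equiv [Fintype V] (D : Digraph' V) (hD : D.Loopless)
    (D' : Digraph' W) (e : W ≃ V)
    (he : ∀ a b, D'.Adj a b → D.Adj (e a) (e b)) :
    D'.dichromaticNumber ≤ D.dichromaticNumber := by
  obtain ⟨c, hc⟩ := exists_coloring_dichromatic D hD
  exact Nat.sInf_le ⟨c ∘ e, coloring_transfer D D' e he c hc⟩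

lemma acyclicOn_image (D : Digraph' V) (S : Set V) (A : Set S)
    (hA : (D.induce S).AcyclicOn A) : D.AcyclicOn (Subtype.val '' A) := by
  intro v hv
  have key : ∀ x y, Relation.TransGen
      (fun x y => x ∈ Subtype.val '' A ∧ y ∈ Subtype.val '' A ∧ D.Adj x y) x y →
      ∃ (a b : S), a.1 = x ∧ b.1 = y ∧ Relation.TransGen
        (fun p q => p ∈ A ∧ q ∈ A ∧ (D.induce S).Adj p q) a b := by
    intro x y h
    induction h with
    | single h =>
      obtain ⟨a, ha, hax⟩ := h.1
      obtain ⟨b, hb, hby⟩ := h.2.1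
      exact ⟨a, b, hax, hby, .single ⟨ha, hb, by
        show D.Adj a.1 b.1; rw [hax, hby]; exact h.2.2⟩⟩
    | tail h₁ h₂ ih =>
      obtain ⟨a, b, hax, hby, ht⟩ := ih
      obtain ⟨b', hb', hb'val⟩ := h₂.1
      obtain ⟨cc, hcc, hccval⟩ := h₂.2.1
      have hbb : b' = b := Subtype.ext (hb'val.trans hby.symm)
      subst hbb
      exact ⟨a, cc, hax, hccval, ht.tail ⟨hb', hcc, by
        show D.Adj b'.1 cc.1; rw [hb'val, hccval]; exact h₂.2.2⟩⟩
  obtain ⟨a, b, ha, hb, ht⟩ := key v v hv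
  have hab : a = b := Subtype.ext (ha.trans hb.symm)
  subst hab
  exact hA a ht

end MaderAux
namespace MaderAux

open Digraph'

variable {V W : Type}

lemma dichromatic_empty (D : Digraph' V) :
    (D.induce (∅ : Set V)).dichromaticNumber = 0 := by
  refine Nat.le_zero.mp (Nat.sInf_le ⟨fun v => (v.2 : False).elim, fun i => i.elim0⟩)

lemma dichromatic_le_one_of_subsingleton (D : Digraph' W) (hD : D.Loopless)
    (hW : ∀ x y : W, x = y) : D.dichromaticNumber ≤ 1 := by
  refine Nat.sInf_le ⟨fun _ => 0, fun i => acyclicOn_of_subsingleton D hD ?_⟩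
  intro x _ y _
  exact hW x y

lemma dichromatic_subadd [Fintype V] (D : Digraph' V) (hD : D.Loopless) (X : Set V) :
    D.dichromaticNumber ≤
      (D.induce X).dichromaticNumber + (D.induce Xᶜ).dichromaticNumber := by
  classical
  haveI : Fintype X := Fintype.ofFinite _
  haveI : Fintype ↥(Xᶜ) := Fintype.ofFinite _
  obtain ⟨c₁, hc₁⟩ := exists_coloring_dichromatic (D.induce X) (loopless_induce D hD X)
  obtain ⟨c₂, hc₂⟩ := exists_coloring_dichromatic (D.induce Xᶜ) (loopless_induce D hD Xᶜ)
  refine Nat.sInf_le ⟨fun v => if h : v ∈ X then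
      Fin.castAdd (D.induce Xᶜ).dichromaticNumber (c₁ ⟨v, h⟩)
      else Fin.natAdd (D.induce X).dichromaticNumber (c₂ ⟨v, h⟩), ?_⟩
  intro i
  refine Fin.addCases (fun j => ?_) (fun j => ?_) i
  · refine acyclicOn_mono D ?_ (acyclicOn_image D X _ (hc₁ j))
    intro v hv
    simp only [Set.mem_setOf_eq] at hv
    by_cases hX : v ∈ X
    · rw [dif_pos hX] at hv
      refine ⟨⟨v, hX⟩, ?_, rfl⟩
      have hval : ((c₁ ⟨v, hX⟩ : Fin _) : ℕ) = (j : ℕ) := by have h := congrArg Fin.val hv; exact h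
      exact Fin.ext hval
    · exfalso
      rw [dif_neg hX] at hv
      have hval : (D.induce X).dichromaticNumber + ((c₂ ⟨v, hX⟩ : Fin _) : ℕ)
          = (j : ℕ) := by have h := congrArg Fin.val hv; exact h
      have hj := j.isLt
      omega
  · refine acyclicOn_mono D ?_ (acyclicOn_image D Xᶜ _ (hc₂ j))
    intro v hv
    simp only [Set.mem_setOf_eq] at hv
    by_cases hX : v ∈ X
    · exfalso
      rw [dif_pos hX] at hv
      have hval : ((c₁ ⟨v, hX⟩ : Fin _) : ℕ)
          = (D.induce X).dichromaticNumber + (j : ℕ) := by have h := congrArg Fin.val hv; exact h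
      have hlt := (c₁ ⟨v, hX⟩).isLt
      omega
    · rw [dif_neg hX] at hv
      refine ⟨⟨v, hX⟩, ?_, rfl⟩
      have hval : (D.induce X).dichromaticNumber + ((c₂ ⟨v, hX⟩ : Fin _) : ℕ)
          = (D.induce X).dichromaticNumber + (j : ℕ) := by have h := congrArg Fin.val hv; exact h
      exact Fin.ext (by omega)

lemma dichromatic_erase [Fintype V] (D : Digraph' V) (hD : D.Loopless)
    (X : Set V) (v : V) :
    (D.induce X).dichromaticNumber ≤ (D.induce (X \ {v})).dichromaticNumber + 1 := by
  classical
  haveI : Fintype X := Fintype.ofFinite _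
  set D' := D.induce X with hD'
  have hD'loop : D'.Loopless := loopless_induce D hD X
  set S' : Set X := {u | u.1 ≠ v} with hS'
  have h1 : D'.dichromaticNumber ≤
      (D'.induce S').dichromaticNumber + (D'.induce S'ᶜ).dichromaticNumber :=
    dichromatic_subadd D' hD'loop S'
  have h2 : (D'.induce S'ᶜ).dichromaticNumber ≤ 1 := by
    refine dichromatic_le_one_of_subsingleton _ (loopless_induce D' hD'loop _) ?_
    intro x y
    have hx : x.1.1 = v := not_not.mp x.2
    have hy : y.1.1 = v := not_not.mp y.2
    exact Subtype.ext (Subtype.ext (hx.trans hy.symm))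
  have h3 : (D'.induce S').dichromaticNumber ≤
      (D.induce (X \ {v})).dichromaticNumber := by
    haveI : Fintype ↥(X \ {v}) := Fintype.ofFinite _
    refine dichromatic_le_of_equiv (D.induce (X \ {v}))
      (loopless_induce D hD _) (D'.induce S')
      ⟨fun u => ⟨u.1.1, u.1.2, u.2⟩, fun w => ⟨⟨w.1, w.2.1⟩, w.2.2⟩,
        fun u => rfl, fun w => rfl⟩ ?_
    intro p q hpq
    exact hpq
  omega

end MaderAux
namespace MaderAux

open Digraph'

variable {V W : Type}

lemma disjUnion_adj_inl {α β : Type} {F₁ : Digraph' α} {F₂ : Digraph' β} {a b : α} :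
    (disjUnion F₁ F₂).Adj (.inl a) (.inl b) ↔ F₁.Adj a b := Iff.rfl

lemma disjUnion_adj_inr {α β : Type} {F₁ : Digraph' α} {F₂ : Digraph' β} {a b : β} :
    (disjUnion F₁ F₂).Adj (.inr a) (.inr b) ↔ F₂.Adj a b := Iff.rfl

/-- Transfer a subdivision along an injective arc-preserving map, recording
that all vertices used lie in the range. -/
lemma containsSubdivision_map {α : Type} (D : Digraph' V) (D' : Digraph' W)
    (F : Digraph' α) (f : W → V) (hf : Function.Injective f)
    (hadj : ∀ a b, D'.Adj a b → D.Adj (f a) (f b))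
    (h : D'.ContainsSubdivision F) (S : Set V) (hfS : ∀ w, f w ∈ S) :
    ∃ (β : α → V) (p : ∀ a b, F.Adj a b → List V),
      Function.Injective β ∧
      (∀ a b (h : F.Adj a b), D.IsDipath (β a) (p a b h) (β b)) ∧
      (∀ a b (h : F.Adj a b) (x : V), x ∈ p a b h → x ∉ Set.range β) ∧
      (∀ a b (h : F.Adj a b) (a' b' : α) (h' : F.Adj a' b'),
        (a, b) ≠ (a', b') → ∀ x, x ∈ p a b h → x ∉ p a' b' h') ∧
      (∀ x, x ∈ Set.range β → x ∈ S) ∧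
      (∀ a b (h : F.Adj a b) (x : V), x ∈ p a b h → x ∈ S) := by
  obtain ⟨β, p, hβ, hpath, havoid, hdisj⟩ := h
  refine ⟨f ∘ β, fun a b h => (p a b h).map f, hf.comp hβ, ?_, ?_, ?_, ?_, ?_⟩
  · intro a b h
    obtain ⟨hc, hn⟩ := hpath a b h
    have hl : (f (β a) :: (p a b h).map f ++ [f (β b)])
        = ((β a :: p a b h ++ [β b]).map f) := by simp
    constructor
    · show List.IsChain D.Adj (f (β a) :: (p a b h).map f ++ [f (β b)])
      rw [hl, List.isChain_map]
      exact hc.imp (fun x y => hadj x y)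
    · show (f (β a) :: (p a b h).map f ++ [f (β b)]).Nodup
      rw [hl]
      exact hn.map hf
  · rintro a b h x hx ⟨a₀, ha₀⟩
    obtain ⟨y, hy, rfl⟩ := List.mem_map.mp hx
    exact havoid a b h y hy ⟨a₀, hf ha₀⟩
  · rintro a b h a' b' h' hne x hx hx'
    obtain ⟨y, hy, rfl⟩ := List.mem_map.mp hx
    obtain ⟨y', hy', hyy'⟩ := List.mem_map.mp hx'
    exact hdisj a b h a' b' h' hne y hy (hf hyy'.symm ▸ hy')
  · rintro x ⟨a₀, rfl⟩
    exact hfS _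
  · intro a b h x hx
    obtain ⟨y, _, rfl⟩ := List.mem_map.mp hx
    exact hfS y

/-- A subdivision of a disjoint union restricts to a subdivision of the
left part. -/
lemma containsSubdivision_left {α β : Type} (D : Digraph' V)
    (F₁ : Digraph' α) (F₂ : Digraph' β)
    (h : D.ContainsSubdivision (disjUnion F₁ F₂)) : D.ContainsSubdivision F₁ := by
  obtain ⟨B, p, hB, hpath, havoid, hdisj⟩ := h
  refine ⟨fun a => B (.inl a), fun a b h => p (.inl a) (.inl b) (disjUnion_adj_inl.mpr h),
    fun x y hxy => Sum.inl_injective (hB hxy), fun a b h => hpath _ _ _,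
    ?_, ?_⟩
  · rintro a b h x hx ⟨a₀, ha₀⟩
    exact havoid _ _ _ x hx ⟨.inl a₀, ha₀⟩
  · intro a b h a' b' h' hne x hx
    refine hdisj _ _ _ _ _ _ ?_ x hx
    intro heq
    apply hne
    have h1 : (Sum.inl a : α ⊕ β) = .inl a' := congrArg Prod.fst heq
    have h2 : (Sum.inl b : α ⊕ β) = .inl b' := congrArg Prod.snd heq
    rw [Sum.inl_injective h1, Sum.inl_injective h2]

/-- A subdivision of a disjoint union restricts to a subdivision of the
right part. -/
lemma containsSubdivision_right {α β : Type} (D : Digraph' V)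
    (F₁ : Digraph' α) (F₂ : Digraph' β)
    (h : D.ContainsSubdivision (disjUnion F₁ F₂)) : D.ContainsSubdivision F₂ := by
  obtain ⟨B, p, hB, hpath, havoid, hdisj⟩ := h
  refine ⟨fun a => B (.inr a), fun a b h => p (.inr a) (.inr b) (disjUnion_adj_inr.mpr h),
    fun x y hxy => Sum.inr_injective (hB hxy), fun a b h => hpath _ _ _,
    ?_, ?_⟩
  · rintro a b h x hx ⟨a₀, ha₀⟩
    exact havoid _ _ _ x hx ⟨.inr a₀, ha₀⟩
  · intro a b h a' b' h' hne x hx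
    refine hdisj _ _ _ _ _ _ ?_ x hx
    intro heq
    apply hne
    have h1 : (Sum.inr a : α ⊕ β) = .inr a' := congrArg Prod.fst heq
    have h2 : (Sum.inr b : α ⊕ β) = .inr b' := congrArg Prod.snd heq
    rw [Sum.inr_injective h1, Sum.inr_injective h2]

end MaderAux
namespace MaderAux

open Digraph'

variable {V : Type}

/-- Combine disjoint subdivisions of `F₁` (inside `S`) and of `F₂`
(inside `Sᶜ`) into a subdivision of the disjoint union. -/
lemma combine {α2 β2 : Type} (D : Digraph' V) (F₁ : Digraph' α2) (F₂ : Digraph' β2)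
    (S : Set V)
    (h₁ : ∃ (β : α2 → V) (p : ∀ a b, F₁.Adj a b → List V),
      Function.Injective β ∧
      (∀ a b (h : F₁.Adj a b), D.IsDipath (β a) (p a b h) (β b)) ∧
      (∀ a b (h : F₁.Adj a b) (x : V), x ∈ p a b h → x ∉ Set.range β) ∧
      (∀ a b (h : F₁.Adj a b) (a' b' : α2) (h' : F₁.Adj a' b'),
        (a, b) ≠ (a', b') → ∀ x, x ∈ p a b h → x ∉ p a' b' h') ∧
      (∀ x, x ∈ Set.range β → x ∈ S) ∧
      (∀ a b (h : F₁.Adj a b) (x : V), x ∈ p a b h → x ∈ S))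
    (h₂ : ∃ (β : β2 → V) (p : ∀ a b, F₂.Adj a b → List V),
      Function.Injective β ∧
      (∀ a b (h : F₂.Adj a b), D.IsDipath (β a) (p a b h) (β b)) ∧
      (∀ a b (h : F₂.Adj a b) (x : V), x ∈ p a b h → x ∉ Set.range β) ∧
      (∀ a b (h : F₂.Adj a b) (a' b' : β2) (h' : F₂.Adj a' b'),
        (a, b) ≠ (a', b') → ∀ x, x ∈ p a b h → x ∉ p a' b' h') ∧
      (∀ x, x ∈ Set.range β → x ∈ Sᶜ) ∧
      (∀ a b (h : F₂.Adj a b) (x : V), x ∈ p a b h → x ∈ Sᶜ)) :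
    D.ContainsSubdivision (disjUnion F₁ F₂) := by
  obtain ⟨β₁, p₁, hinj₁, hpath₁, havoid₁, hdisj₁, hrβ₁, hrp₁⟩ := h₁
  obtain ⟨β₂, p₂, hinj₂, hpath₂, havoid₂, hdisj₂, hrβ₂, hrp₂⟩ := h₂
  refine ⟨Sum.elim β₁ β₂, fun a b h =>
      match a, b, h with
      | .inl a, .inl b, h => p₁ a b h
      | .inr a, .inr b, h => p₂ a b h
      | .inl _, .inr _, h => False.elim h
      | .inr _, .inl _, h => False.elim h, ?_, ?_, ?_, ?_⟩
  · rintro (a | a) (b | b) hab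
    · exact congrArg Sum.inl (hinj₁ hab)
    · have hab' : β₁ a = β₂ b := hab
      exact absurd (hab' ▸ hrβ₁ (β₁ a) ⟨a, rfl⟩)
        ((Set.mem_compl_iff _ _).mp (hrβ₂ (β₂ b) ⟨b, rfl⟩))
    · have hab' : β₂ a = β₁ b := hab
      exact absurd (hrβ₁ (β₁ b) ⟨b, rfl⟩)
        (hab' ▸ (Set.mem_compl_iff _ _).mp (hrβ₂ (β₂ a) ⟨a, rfl⟩))
    · exact congrArg Sum.inr (hinj₂ hab)
  · rintro (a | a) (b | b) h
    · exact hpath₁ a b h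
    · exact False.elim h
    · exact False.elim h
    · exact hpath₂ a b h
  · rintro (a | a) (b | b) h x hx ⟨w, hw⟩
    · rcases w with c | c
      · exact havoid₁ a b h x hx ⟨c, hw⟩
      · exact (Set.mem_compl_iff _ _).mp (hrβ₂ x ⟨c, hw⟩) (hrp₁ a b h x hx)
    · exact False.elim h
    · exact False.elim h
    · rcases w with c | c
      · exact absurd (hrβ₁ x ⟨c, hw⟩) ((Set.mem_compl_iff _ _).mp (hrp₂ a b h x hx))
      · exact havoid₂ a b h x hx ⟨c, hw⟩
  · rintro (a | a) (b | b) h a' b' h' hne x hx hx'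
    · rcases a' with a' | a' <;> rcases b' with b' | b'
      · refine hdisj₁ a b h a' b' h' ?_ x hx hx'
        intro he
        obtain ⟨h1, h2⟩ := Prod.mk.inj he
        exact hne (by rw [h1, h2])
      · exact False.elim h'
      · exact False.elim h'
      · exact (Set.mem_compl_iff _ _).mp (hrp₂ a' b' h' x hx') (hrp₁ a b h x hx)
    · exact False.elim h
    · exact False.elim h
    · rcases a' with a' | a' <;> rcases b' with b' | b'
      · exact (Set.mem_compl_iff _ _).mp (hrp₂ a b h x hx) (hrp₁ a' b' h' x hx')
      · exact False.elim h'
      · exact False.elim h'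
      · refine hdisj₂ a b h a' b' h' ?_ x hx hx'
        intro he
        obtain ⟨h1, h2⟩ := Prod.mk.inj he
        exact hne (by rw [h1, h2])

end MaderAux
namespace MaderAux

open Digraph'

/-- From a Mader bound and a high-dichromatic induced subdigraph, extract a
subdivision confined to the inducing set. -/
lemma exists_confined {n : ℕ} {α2 : Type} (D : Digraph' (Fin n)) (hD : D.Loopless)
    (F : Digraph' α2) (k : ℕ) (hb : MaderBound F k) (S : Set (Fin n))
    (hk : k ≤ (D.induce S).dichromaticNumber) :
    ∃ (β : α2 → Fin n) (p : ∀ a b, F.Adj a b → List (Fin n)),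
      Function.Injective β ∧
      (∀ a b (h : F.Adj a b), D.IsDipath (β a) (p a b h) (β b)) ∧
      (∀ a b (h : F.Adj a b) (x : Fin n), x ∈ p a b h → x ∉ Set.range β) ∧
      (∀ a b (h : F.Adj a b) (a' b' : α2) (h' : F.Adj a' b'),
        (a, b) ≠ (a', b') → ∀ x, x ∈ p a b h → x ∉ p a' b' h') ∧
      (∀ x, x ∈ Set.range β → x ∈ S) ∧
      (∀ a b (h : F.Adj a b) (x : Fin n), x ∈ p a b h → x ∈ S) := by
  classical
  haveI : Fintype S := Fintype.ofFinite _
  set e := Fintype.equivFin S with he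
  set D₀ : Digraph' (Fin (Fintype.card S)) :=
    ⟨fun i j => D.Adj (e.symm i).1 (e.symm j).1⟩ with hD₀def
  have hD₀loop : D₀.Loopless := fun i => hD _
  have hle : (D.induce S).dichromaticNumber ≤ D₀.dichromaticNumber := by
    refine dichromatic_le_of_equiv D₀ hD₀loop (D.induce S) e ?_
    intro a b hab
    show D.Adj (e.symm (e a)).1 (e.symm (e b)).1
    rw [Equiv.symm_apply_apply, Equiv.symm_apply_apply]
    exact hab
  have hsub := hb (Fintype.card S) D₀ hD₀loop (le_trans hk hle)
  exact containsSubdivision_map D D₀ F (fun i => (e.symm i).1)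
    (fun i j hij => e.symm.injective (Subtype.ext hij))
    (fun a b hab => hab) hsub S (fun w => (e.symm w).2)

lemma maderBound_disjUnion {α2 β2 : Type} (F₁ : Digraph' α2) (F₂ : Digraph' β2)
    (k₁ k₂ : ℕ) (hk₁ : 1 ≤ k₁) (hb₁ : MaderBound F₁ k₁) (hb₂ : MaderBound F₂ k₂) :
    MaderBound (disjUnion F₁ F₂) (k₁ + k₂) := by
  intro n D hD hχ
  classical
  set T : Set ℕ :=
    {c | ∃ X : Finset (Fin n), k₁ ≤ (D.induce ↑X).dichromaticNumber ∧ X.card = c}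
    with hT
  have hTne : T.Nonempty := by
    refine ⟨(Finset.univ : Finset (Fin n)).card, Finset.univ, ?_, rfl⟩
    have hsub := dichromatic_subadd D hD (Set.univ : Set (Fin n))
    rw [Set.compl_univ, dichromatic_empty] at hsub
    rw [show (↑(Finset.univ : Finset (Fin n)) : Set (Fin n)) = Set.univ
      from Finset.coe_univ]
    omega
  obtain ⟨X, hX, hXcard⟩ := Nat.sInf_mem hTne
  have hXne : X.Nonempty := by
    rcases Finset.eq_empty_or_nonempty X with rfl | h
    · exfalso
      rw [show ((∅ : Finset (Fin n)) : Set (Fin n)) = (∅ : Set (Fin n))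
        from Finset.coe_empty, dichromatic_empty] at hX
      omega
    · exact h
  obtain ⟨v, hv⟩ := hXne
  have hXupper : (D.induce (↑X : Set (Fin n))).dichromaticNumber ≤ k₁ := by
    have herase : ¬ k₁ ≤ (D.induce ↑(X.erase v)).dichromaticNumber := by
      intro hcon
      have h1 : sInf T ≤ (X.erase v).card := Nat.sInf_le ⟨X.erase v, hcon, rfl⟩
      have h2 : (X.erase v).card = X.card - 1 := Finset.card_erase_of_mem hv
      have h3 : 0 < X.card := Finset.card_pos.mpr ⟨v, hv⟩
      omega
    have hstep : (D.induce (↑X : Set (Fin n))).dichromaticNumber ≤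
        (D.induce ((↑X : Set (Fin n)) \ {v})).dichromaticNumber + 1 :=
      dichromatic_erase D hD ↑X v
    rw [show ((↑X : Set (Fin n)) \ {v}) = ↑(X.erase v)
      from (Finset.coe_erase v X).symm] at hstep
    omega
  have hcompl : k₂ ≤ (D.induce ((↑X : Set (Fin n))ᶜ)).dichromaticNumber := by
    have := dichromatic_subadd D hD (↑X : Set (Fin n))
    omega
  exact combine D F₁ F₂ ↑X
    (exists_confined D hD F₁ k₁ hb₁ ↑X hX)
    (exists_confined D hD F₂ k₂ hb₂ ((↑X : Set (Fin n))ᶜ) hcompl)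

end MaderAux

/-- If `F` is the disjoint union of `F₁` and `F₂`, then
`mader(F) ≤ mader(F₁) + mader(F₂)`. -/
theorem mader_disjUnion {α β : Type} (F₁ : Digraph' α) (F₂ : Digraph' β) :
    Digraph'.mader (disjUnion F₁ F₂) ≤ Digraph'.mader F₁ + Digraph'.mader F₂ := by
  classical
  by_cases h1 : {k : ℕ | 1 ≤ k ∧ Digraph'.MaderBound F₁ k}.Nonempty
  · by_cases h2 : {k : ℕ | 1 ≤ k ∧ Digraph'.MaderBound F₂ k}.Nonempty
    · have m1 := Nat.sInf_mem h1
      have m2 := Nat.sInf_mem h2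
      exact Nat.sInf_le ⟨le_trans m1.1 (Nat.le_add_right _ _),
        MaderAux.maderBound_disjUnion F₁ F₂ _ _ m1.1 m1.2 m2.2⟩
    · have hempty : {k : ℕ | 1 ≤ k ∧ Digraph'.MaderBound (disjUnion F₁ F₂) k} = ∅ := by
        rw [Set.eq_empty_iff_forall_notMem]
        rintro k ⟨hk1, hkb⟩
        exact h2 ⟨k, hk1, fun n D hD hχ =>
          MaderAux.containsSubdivision_right D F₁ F₂ (hkb n D hD hχ)⟩
      simp only [Digraph'.mader, hempty, Nat.sInf_empty]
      exact Nat.zero_le _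
  · have hempty : {k : ℕ | 1 ≤ k ∧ Digraph'.MaderBound (disjUnion F₁ F₂) k} = ∅ := by
      rw [Set.eq_empty_iff_forall_notMem]
      rintro k ⟨hk1, hkb⟩
      exact h1 ⟨k, hk1, fun n D hD hχ =>
        MaderAux.containsSubdivision_left D F₁ F₂ (hkb n D hD hχ)⟩
    simp only [Digraph'.mader, hempty, Nat.sInf_empty]
    exact Nat.zero_le _
end

section
/- Let D be a digraph, k ∈ ℕ, and let c: V(D) → {1,…,k} be an acyclic coloring of D. Fix distinct colors i ≠ j in {1,…,k}, let D_{i,j} be the subdigraph of D induced by c⁻¹({i,j}), and let X ⊆ c⁻¹({i,j}) be the vertex set of a strong component of D_{i,j}. Then the coloring c' obtained from c by swapping colors i and j on X (and leaving all other vertices unchanged) is also an acyclic coloring of D. -/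
/-- `X` is the vertex set of a strong component of the digraph with adjacency
relation `r`: `X` is the set of all vertices mutually reachable (along `r`)
from some vertex `x`. -/
def IsStrongComponentOf {V : Type} (r : V → V → Prop) (X : Set V) : Prop :=
  ∃ x, X = {y | Relation.ReflTransGen r x y ∧ Relation.ReflTransGen r y x}

/-- Auxiliary: to transport a directed cycle from relation `s` to relation `t`,
it suffices to convert each step of the cycle, knowing its position on the cycle. -/
lemma cycle_mono {V : Type} {s t : V → V → Prop} {v : V}
    (H : ∀ a b, s a b → Relation.ReflTransGen s v a → Relation.ReflTransGen s b v → t a b)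
    (h : Relation.TransGen s v v) : Relation.TransGen t v v := by
  suffices h' : ∀ w, Relation.TransGen s v w → Relation.ReflTransGen s w v →
      Relation.TransGen t v w by
    exact h' v h Relation.ReflTransGen.refl
  intro w hw
  induction hw with
  | single hs =>
      exact fun hwv => Relation.TransGen.single (H _ _ hs Relation.ReflTransGen.refl hwv)
  | tail hb hs ih =>
      intro hwv
      exact (ih (Relation.ReflTransGen.head hs hwv)).tail (H _ _ hs hb.to_reflTransGen hwv)

/-- **directed Kempe switch.** Let `c` be an acyclic coloring of
`D`, let `i ≠ j` be two colors, and let `X` be the vertex set of a strong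
component of `D_{i,j}`, the subdigraph induced by the vertices colored `i` or
`j`. Then the coloring obtained from `c` by swapping the colors `i` and `j` on
`X` is again an acyclic coloring of `D`. -/
theorem kempe_switch {V : Type} {k : ℕ} (D : Digraph' V) (c : V → Fin k)
    (hc : D.IsAcyclicColoring c) (i j : Fin k) (hij : i ≠ j) (X : Set V)
    (hX : IsStrongComponentOf
      (fun x y => (c x = i ∨ c x = j) ∧ (c y = i ∨ c y = j) ∧ D.Adj x y) X)
    (hXsub : X ⊆ {v | c v = i ∨ c v = j})
    (c' : V → Fin k)
    (h₁ : ∀ v ∉ X, c' v = c v)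
    (h₂ : ∀ v ∈ X, c v = i → c' v = j)
    (h₃ : ∀ v ∈ X, c v = j → c' v = i) :
    D.IsAcyclicColoring c' := by
  intro m v hv
  obtain ⟨x, hx⟩ := hX
  set r : V → V → Prop :=
    fun x y => (c x = i ∨ c x = j) ∧ (c y = i ∨ c y = j) ∧ D.Adj x y with hrdef
  set s : V → V → Prop :=
    fun a b => a ∈ {u | c' u = m} ∧ b ∈ {u | c' u = m} ∧ D.Adj a b with hsdef
  have hv' : Relation.TransGen s v v := hv
  have hXc' : ∀ a ∈ X, c' a = i ∨ c' a = j := by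
    intro a ha
    rcases hXsub ha with h | h
    · exact Or.inr (h₂ a ha h)
    · exact Or.inl (h₃ a ha h)
  by_cases hm : m = i ∨ m = j
  · have hmem : ∀ a, c' a = m → (c a = i ∨ c a = j) := by
      intro a ha
      by_cases haX : a ∈ X
      · exact hXsub haX
      · rw [h₁ a haX] at ha; rw [ha]; exact hm
    have hsr : ∀ a b, s a b → r a b := by
      rintro a b ⟨ha, hb, hab⟩
      exact ⟨hmem a ha, hmem b hb, hab⟩
    by_cases hvX : v ∈ X
    · -- the whole cycle lies in X; swapped colors give a cycle in the other old class
      have hvx : Relation.ReflTransGen r x v ∧ Relation.ReflTransGen r v x := by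
        rw [hx] at hvX; exact hvX
      have hmemX : ∀ a, Relation.ReflTransGen s v a → Relation.ReflTransGen s a v → a ∈ X := by
        intro a h1 h2
        rw [hx]
        exact ⟨hvx.1.trans (Relation.ReflTransGen.mono hsr _ _ h1), (Relation.ReflTransGen.mono hsr _ _ h2).trans hvx.2⟩
      set j' : Fin k := if m = i then j else i with hj'
      have hcj' : ∀ a ∈ X, c' a = m → c a = j' := by
        intro a haX ha
        rcases hXsub haX with h | h
        · have hm' := h₂ a haX h
          rw [ha] at hm'
          have : ¬ (m = i) := by rw [hm']; exact fun e => hij e.symm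
          rw [hj', if_neg this]; exact h
        · have hm' := h₃ a haX h
          rw [ha] at hm'
          rw [hj', if_pos hm']; exact h
      exact hc j' v (cycle_mono (fun a b hab h1 h2 =>
        ⟨hcj' a (hmemX a h1 (Relation.ReflTransGen.head hab h2)) hab.1,
         hcj' b (hmemX b (h1.tail hab) h2) hab.2.1, hab.2.2⟩) hv')
    · -- the whole cycle avoids X; colors unchanged
      have hmemX : ∀ a, Relation.ReflTransGen s v a → Relation.ReflTransGen s a v → a ∉ X := by
        intro a h1 h2 haX
        apply hvX
        rw [hx] at haX ⊢
        exact ⟨haX.1.trans (Relation.ReflTransGen.mono hsr _ _ h2), (Relation.ReflTransGen.mono hsr _ _ h1).trans haX.2⟩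
      exact hc m v (cycle_mono (fun a b hab h1 h2 =>
        ⟨show c a = m from (h₁ a (hmemX a h1 (Relation.ReflTransGen.head hab h2))).symm.trans hab.1,
         show c b = m from (h₁ b (hmemX b (h1.tail hab) h2)).symm.trans hab.2.1, hab.2.2⟩) hv')
  · -- m is neither i nor j: the class of m is unchanged
    push_neg at hm
    apply hc m v
    refine Relation.TransGen.mono ?_ _ _ hv'
    rintro a b ⟨ha, hb, hab⟩
    have ha' : c' a = m := ha
    have hb' : c' b = m := hb
    have haX : a ∉ X := by
      intro h
      rcases hXc' a h with h' | h'
      · exact hm.1 (ha'.symm.trans h')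
      · exact hm.2 (ha'.symm.trans h')
    have hbX : b ∉ X := by
      intro h
      rcases hXc' b h with h' | h'
      · exact hm.1 (hb'.symm.trans h')
      · exact hm.2 (hb'.symm.trans h')
    exact ⟨show c a = m from (h₁ a haX).symm.trans ha', show c b = m from (h₁ b hbX).symm.trans hb', hab⟩
end

section
/- Let D be a digraph, (u,w) ∈ A(D), and let D' be obtained from D by deleting the vertex u and adding the arc (x,w) for every x ∈ N_D⁻(u) \ {w} for which that arc is not already present. Let F be a sink-free orientation of a cubic (3-regular) graph. If D' contains a subdivision of F, then so does D. -/
/-- `F` is an orientation of a cubic (3-regular) undirected graph: `F` is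
loopless, has no digons, and every vertex has exactly `3` neighbors in the
underlying graph. -/
def IsCubicOrientation {γ : Type} [Fintype γ] (F : Digraph' γ) : Prop :=
  F.Loopless ∧ (∀ a b, ¬ (F.Adj a b ∧ F.Adj b a)) ∧
  ∀ v, ({w | F.Adj v w} ∪ {w | F.Adj w v}).ncard = 3

lemma strip_aux {α : Type} {S : α → α → Prop} {w : α} :
    ∀ {l : List α}, List.Chain' (fun a b => S a b ∨ b = w) l →
      (∀ b ∈ l.tail, b ≠ w) → List.Chain' S l := by
  intro l
  induction l with
  | nil => intro _ _; exact .nil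
  | cons a t ih =>
    cases t with
    | nil => intro _ _; exact .singleton _
    | cons b t' =>
      intro h hb
      unfold List.Chain' at h ⊢
      rw [List.isChain_cons_cons] at h ⊢
      refine ⟨h.1.resolve_right (hb b (by simp)), ih h.2 ?_⟩
      intro x hx
      exact hb x (List.mem_cons_of_mem _ hx)

lemma fail_mem_tail {α : Type} {S : α → α → Prop} {w : α} {l : List α}
    (h : List.Chain' (fun a b => S a b ∨ b = w) l)
    (hn : ¬ List.Chain' S l) : w ∈ l.tail := by
  by_contra hw
  exact hn (strip_aux h (fun b hb hbw => hw (hbw ▸ hb)))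

lemma chain'_insert_aux {α : Type} {S : α → α → Prop} {w u x : α} {L₁ L₂ : List α}
    (h : List.Chain' (fun a b => S a b ∨ b = w) (L₁ ++ x :: w :: L₂))
    (hw1 : w ∉ L₁) (hwx : w ≠ x) (hw2 : w ∉ L₂)
    (hxu : S x u) (huw : S u w) :
    List.Chain' S (L₁ ++ x :: u :: w :: L₂) := by
  unfold List.Chain' at h ⊢
  rw [List.isChain_split] at h
  have hc1 : List.Chain' S (L₁ ++ [x]) := by
    refine strip_aux h.1 ?_
    intro b hb hbw
    subst hbw
    have := (List.tail_sublist (L₁ ++ [x])).subset hb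
    rcases List.mem_append.mp this with h' | h'
    · exact hw1 h'
    · exact hwx (List.mem_singleton.mp h')
  have hc2 : List.Chain' S (w :: L₂) := by
    refine strip_aux h.2.tail ?_
    intro b hb hbw
    subst hbw
    exact hw2 hb
  rw [show L₁ ++ x :: u :: w :: L₂ = (L₁ ++ [x]) ++ u :: (w :: L₂) by simp]
  rw [List.isChain_split]
  constructor
  · rw [List.isChain_append]
    refine ⟨hc1, List.isChain_singleton u, ?_⟩
    intro y hy z hz
    simp at hz
    subst hz
    rw [List.getLast?_concat] at hy
    simp at hy
    subst hy
    exact hxu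
  · rw [List.isChain_cons_cons]
    exact ⟨huw, hc2⟩

/-- Let `(u,w)` be an arc of `D` and let `D'` be obtained
from `D` by deleting `u` and adding the arc `(x,w)` for every in-neighbor
`x ≠ w` of `u` (when not already present). If `F` is a sink-free orientation of
a cubic graph and `D'` contains a subdivision of `F`, then so does `D`. -/
theorem butterfly_contraction {V γ : Type} [Fintype γ] (D : Digraph' V)
    (hD : D.Loopless) (u w : V) (huw : D.Adj u w)
    (F : Digraph' γ) (hF : IsCubicOrientation F) (hsf : ∀ a, ∃ b, F.Adj a b)
    (hsub : Digraph'.ContainsSubdivision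
      (⟨fun a b => D.Adj a.1 b.1 ∨ (D.Adj a.1 u ∧ b.1 = w ∧ a.1 ≠ w)⟩ :
        Digraph' {x : V // x ≠ u}) F) :
    D.ContainsSubdivision F := by
  classical
  obtain ⟨β, p, hinj, hpath, havoid, hdisj⟩ := hsub
  set B : γ → V := fun a => (β a).1 with hBdef
  have hBinj : Function.Injective B := fun x y hxy => hinj (Subtype.ext hxy)
  set P : ∀ a b, F.Adj a b → List V := fun a b h => (p a b h).map Subtype.val with hPdef
  set L : ∀ a b, F.Adj a b → List V := fun a b h => B a :: P a b h ++ [B b] with hLdef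
  have hwu : w ≠ u := fun h => hD u (h ▸ huw)
  have hmap : ∀ a b (h : F.Adj a b), L a b h = (β a :: p a b h ++ [β b]).map Subtype.val := by
    intro a b h; simp [hLdef, hPdef, hBdef]
  have hch : ∀ a b (h : F.Adj a b),
      List.Chain' (fun x y => D.Adj x y ∨ (D.Adj x u ∧ y = w ∧ x ≠ w)) (L a b h) := by
    intro a b h
    unfold List.Chain'
    rw [hmap, List.isChain_map]
    exact (hpath a b h).1
  have hQ : ∀ a b (h : F.Adj a b),
      List.Chain' (fun x y => D.Adj x y ∨ y = w) (L a b h) :=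
    fun a b h => List.IsChain.imp (fun x y hxy => hxy.imp_right (fun h' => h'.2.1)) (hch a b h)
  have hnodupL : ∀ a b (h : F.Adj a b), (L a b h).Nodup := by
    intro a b h
    rw [hmap]
    exact ((hpath a b h).2).map Subtype.val_injective
  have huL : ∀ a b (h : F.Adj a b), u ∉ L a b h := by
    intro a b h hu
    rw [hmap] at hu
    simp only [List.mem_map] at hu
    obtain ⟨y, _, hy⟩ := hu
    exact y.2 hy
  have huP : ∀ a b (h : F.Adj a b), u ∉ P a b h := by
    intro a b h hu
    exact huL a b h (by simp [hLdef, hu])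
  have huB : u ∉ Set.range B := by rintro ⟨z, hz⟩; exact (β z).2 hz
  have havoidP : ∀ a b (h : F.Adj a b) (x : V), x ∈ P a b h → x ∉ Set.range B := by
    rintro a b h x hx ⟨z, hz⟩
    rw [hPdef] at hx
    rcases List.mem_map.mp hx with ⟨y, hy, rfl⟩
    exact havoid a b h y hy ⟨z, Subtype.ext hz⟩
  have hdisjP : ∀ a b (h : F.Adj a b) a' b' (h' : F.Adj a' b'), (a,b) ≠ (a',b') →
      ∀ x, x ∈ P a b h → x ∉ P a' b' h' := by
    intro a b h a' b' h' hne x hx hx'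
    rw [hPdef] at hx hx'
    rcases List.mem_map.mp hx with ⟨y, hy, rfl⟩
    rcases List.mem_map.mp hx' with ⟨y', hy', he⟩
    have hyy : y' = y := Subtype.ext he
    exact hdisj a b h a' b' h' hne y hy (hyy ▸ hy')
  by_cases hall : ∀ a b (h : F.Adj a b), List.Chain' D.Adj (L a b h)
  · exact ⟨B, P, hBinj, fun a b h => ⟨hall a b h, hnodupL a b h⟩, havoidP, hdisjP⟩
  push_neg at hall
  obtain ⟨a₀, b₀, h₀, hfail₀⟩ := hall
  by_cases hothers : ∀ a b (h : F.Adj a b), (a, b) ≠ (a₀, b₀) → List.Chain' D.Adj (L a b h)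
  · -- INSERT CASE: a single shortcut arc, insert u before w in the path (a₀,b₀)
    have hfg := hfail₀
    unfold List.Chain' at hfg
    rw [List.isChain_iff_getElem] at hfg
    push_neg at hfg
    obtain ⟨i, hi, hnadj⟩ := hfg
    have hlen : (L a₀ b₀ h₀).length = (P a₀ b₀ h₀).length + 2 := by
      simp [hLdef]
    have hi' : i + 1 < (L a₀ b₀ h₀).length := by omega
    have hii : i < (L a₀ b₀ h₀).length := by omega
    have hiP : i ≤ (P a₀ b₀ h₀).length := by omega
    have hRi := List.isChain_iff_getElem.mp (hch a₀ b₀ h₀) i hi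
    have hsc := hRi.resolve_left hnadj
    obtain ⟨hxu, hyw, hxw⟩ := hsc
    have hyw' : (L a₀ b₀ h₀)[i+1]'hi' = w := hyw
    have hxx : (L a₀ b₀ h₀)[i]'hii = (L a₀ b₀ h₀)[i]'hii := rfl
    have e1 : (L a₀ b₀ h₀).drop i = (L a₀ b₀ h₀)[i] :: (L a₀ b₀ h₀).drop (i+1) :=
      List.drop_eq_getElem_cons hii
    have e2 : (L a₀ b₀ h₀).drop (i+1) = w :: (L a₀ b₀ h₀).drop (i+2) := by
      rw [List.drop_eq_getElem_cons hi', hyw']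
    have hsplit : L a₀ b₀ h₀ =
        (L a₀ b₀ h₀).take i ++ (L a₀ b₀ h₀)[i] :: w :: (L a₀ b₀ h₀).drop (i+2) := by
      conv_lhs => rw [← List.take_append_drop i (L a₀ b₀ h₀)]
      rw [e1, e2]
    have htk : (L a₀ b₀ h₀).take (i+1) = (L a₀ b₀ h₀).take i ++ [(L a₀ b₀ h₀)[i]] := by
      rw [← List.take_concat_get hii, List.concat_eq_append]
    have hA : (L a₀ b₀ h₀).take (i+1) = B a₀ :: (P a₀ b₀ h₀).take i := by
      rw [hLdef]
      simp only [List.take_succ_cons, List.cons_append]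
      rw [List.take_append_of_le_length hiP]
    have hBdrop : (L a₀ b₀ h₀).drop (i+1) = (P a₀ b₀ h₀).drop i ++ [B b₀] := by
      rw [hLdef]
      simp only [List.drop_succ_cons, List.cons_append]
      rw [List.drop_append_of_le_length hiP]
    set newP : List V := (P a₀ b₀ h₀).take i ++ u :: (P a₀ b₀ h₀).drop i with hnewP
    have hform2 : B a₀ :: newP ++ [B b₀] =
        (L a₀ b₀ h₀).take (i+1) ++ u :: (L a₀ b₀ h₀).drop (i+1) := by
      rw [hA, hBdrop, hnewP]
      simp
    have hform : B a₀ :: newP ++ [B b₀] =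
        (L a₀ b₀ h₀).take i ++ (L a₀ b₀ h₀)[i] :: u :: w :: (L a₀ b₀ h₀).drop (i+2) := by
      rw [hform2, e2, htk]
      simp only [List.append_assoc, List.cons_append, List.singleton_append, List.nil_append]
    have hnd' : ((L a₀ b₀ h₀).take i ++ (L a₀ b₀ h₀)[i] :: w :: (L a₀ b₀ h₀).drop (i+2)).Nodup :=
      hsplit ▸ hnodupL a₀ b₀ h₀
    rw [List.nodup_middle, List.nodup_cons] at hnd'
    obtain ⟨-, hnd''⟩ := hnd'
    rw [List.nodup_middle, List.nodup_cons] at hnd''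
    obtain ⟨hwmem, -⟩ := hnd''
    have hw_take : w ∉ (L a₀ b₀ h₀).take i := fun hm => hwmem (List.mem_append.mpr (Or.inl hm))
    have hw_drop : w ∉ (L a₀ b₀ h₀).drop (i+2) := fun hm => hwmem (List.mem_append.mpr (Or.inr hm))
    have hchainQ : List.Chain' (fun x y => D.Adj x y ∨ y = w)
        ((L a₀ b₀ h₀).take i ++ (L a₀ b₀ h₀)[i] :: w :: (L a₀ b₀ h₀).drop (i+2)) :=
      hsplit ▸ hQ a₀ b₀ h₀
    have hnewchain : List.Chain' D.Adj
        ((L a₀ b₀ h₀).take i ++ (L a₀ b₀ h₀)[i] :: u :: w :: (L a₀ b₀ h₀).drop (i+2)) :=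
      chain'_insert_aux hchainQ hw_take (fun h => hxw h.symm) hw_drop hxu huw
    have hnewnodup : (B a₀ :: newP ++ [B b₀]).Nodup := by
      rw [hform2, List.nodup_middle, List.nodup_cons, List.take_append_drop]
      exact ⟨huL a₀ b₀ h₀, hnodupL a₀ b₀ h₀⟩
    have hnewPmem : ∀ x, x ∈ newP → x ∈ P a₀ b₀ h₀ ∨ x = u := by
      intro x hx
      rcases List.mem_append.mp hx with h' | h'
      · exact Or.inl (List.take_subset _ _ h')
      · rcases List.mem_cons.mp h' with h'' | h''
        · exact Or.inr h''
        · exact Or.inl (List.drop_subset _ _ h'')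
    refine ⟨B, fun a b h => if (a,b) = (a₀,b₀) then newP else P a b h, hBinj, ?_, ?_, ?_⟩
    · intro a b h
      dsimp only
      by_cases hab : (a,b) = (a₀,b₀)
      · rw [if_pos hab]
        rw [Prod.mk.injEq] at hab
        obtain ⟨rfl, rfl⟩ := hab
        constructor
        · show List.Chain' D.Adj (B a :: newP ++ [B b])
          rw [hform]
          exact hnewchain
        · exact hnewnodup
      · rw [if_neg hab]
        exact ⟨hothers a b h hab, hnodupL a b h⟩
    · intro a b h x hx
      dsimp only at hx
      by_cases hab : (a,b) = (a₀,b₀)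
      · rw [if_pos hab] at hx
        rcases hnewPmem x hx with h' | rfl
        · exact havoidP a₀ b₀ h₀ x h'
        · exact huB
      · rw [if_neg hab] at hx
        exact havoidP a b h x hx
    · intro a b h a' b' h' hne x hx hx'
      dsimp only at hx hx'
      by_cases hab : (a,b) = (a₀,b₀) <;> by_cases hab' : (a',b') = (a₀,b₀)
      · exact hne (hab.trans hab'.symm)
      · rw [if_pos hab] at hx
        rw [if_neg hab'] at hx'
        rcases hnewPmem x hx with h'' | rfl
        · exact hdisjP a₀ b₀ h₀ a' b' h' (fun e => hab' e.symm) x h'' hx'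
        · exact huP a' b' h' hx'
      · rw [if_neg hab] at hx
        rw [if_pos hab'] at hx'
        rcases hnewPmem x hx' with h'' | rfl
        · exact hdisjP a b h a₀ b₀ h₀ hab x hx h''
        · exact huP a b h hx
      · rw [if_neg hab] at hx
        rw [if_neg hab'] at hx'
        exact hdisjP a b h a' b' h' hne x hx hx'
  · -- REBRAND CASE
    push_neg at hothers
    obtain ⟨a₁, b₁, h₁, hne₁, hfail₁⟩ := hothers
    have hwt₀ : w ∈ (L a₀ b₀ h₀).tail := fail_mem_tail (hQ a₀ b₀ h₀) hfail₀
    have hwt₁ : w ∈ (L a₁ b₁ h₁).tail := fail_mem_tail (hQ a₁ b₁ h₁) hfail₁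
    have htail : ∀ a b (h : F.Adj a b), (L a b h).tail = P a b h ++ [B b] := by
      intro a b h; simp [hLdef]
    rw [htail] at hwt₀ hwt₁
    have hb₀ : B b₀ = w := by
      by_contra hbw
      have hwP₀ : w ∈ P a₀ b₀ h₀ := by
        rcases List.mem_append.mp hwt₀ with h | h
        · exact h
        · simp at h
          exact absurd h.symm hbw
      rcases List.mem_append.mp hwt₁ with h | h
      · exact hdisjP a₀ b₀ h₀ a₁ b₁ h₁ (Ne.symm hne₁) w hwP₀ h
      · simp at h
        exact havoidP a₀ b₀ h₀ w hwP₀ ⟨b₁, h.symm⟩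
    have hb₁ : B b₁ = w := by
      rcases List.mem_append.mp hwt₁ with h | h
      · exact absurd ⟨b₀, hb₀⟩ (havoidP a₁ b₁ h₁ w h)
      · simp at h
        exact h.symm
    have hbb : b₀ = b₁ := hBinj (hb₀.trans hb₁.symm)
    subst hbb
    have haa : a₁ ≠ a₀ := fun h => hne₁ (by rw [h])
    obtain ⟨d, hd⟩ := hsf b₀
    have hdisjIO : Disjoint {y | F.Adj b₀ y} {y | F.Adj y b₀} := by
      rw [Set.disjoint_left]
      intro y hy1 hy2
      exact hF.2.1 b₀ y ⟨hy1, hy2⟩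
    have hcard := hF.2.2 b₀
    rw [Set.ncard_union_eq hdisjIO (Set.toFinite _) (Set.toFinite _)] at hcard
    have hsubIn : ({a₀, a₁} : Set γ) ⊆ {y | F.Adj y b₀} := by
      intro y hy
      rcases hy with rfl | hy
      · exact h₀
      · rw [Set.mem_singleton_iff] at hy
        subst hy
        exact h₁
    have h2le : 2 ≤ ({y | F.Adj y b₀}).ncard := by
      calc 2 = ({a₀, a₁} : Set γ).ncard := (Set.ncard_pair (Ne.symm haa)).symm
        _ ≤ _ := Set.ncard_le_ncard hsubIn (Set.toFinite _)
    have h1le : 1 ≤ ({y | F.Adj b₀ y}).ncard :=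
      (Set.ncard_pos (Set.toFinite _)).mpr ⟨d, hd⟩
    have hInle : ({y | F.Adj y b₀}).ncard ≤ ({a₀, a₁} : Set γ).ncard := by
      rw [Set.ncard_pair (Ne.symm haa)]
      omega
    have hIn : ({a₀, a₁} : Set γ) = {y | F.Adj y b₀} :=
      Set.eq_of_subset_of_ncard_le hsubIn hInle (Set.toFinite _)
    have hOutcard : ({y | F.Adj b₀ y}).ncard = 1 := by omega
    obtain ⟨e, he⟩ := Set.ncard_eq_one.mp hOutcard
    have hde : d = e := by
      have : d ∈ ({e} : Set γ) := he ▸ hd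
      simpa using this
    subst hde
    have hInmem : ∀ a, F.Adj a b₀ → a = a₀ ∨ a = a₁ := by
      intro a ha
      have : a ∈ ({a₀, a₁} : Set γ) := hIn ▸ ha
      simpa using this
    have hOutmem : ∀ b, F.Adj b₀ b → b = d := by
      intro b hb
      have : b ∈ ({d} : Set γ) := he ▸ hb
      simpa using this
    have hwP : ∀ a b (h : F.Adj a b), w ∉ P a b h :=
      fun a b h hw => havoidP a b h w hw ⟨b₀, hb₀⟩
    have hloopF : ∀ a, ¬ F.Adj a a := hF.1
    have hinchain : ∀ a (h : F.Adj a b₀), ¬ List.Chain' D.Adj (L a b₀ h) →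
        List.Chain' D.Adj ((B a :: P a b₀ h) ++ [u]) := by
      intro a h hfa
      have hLsplit : L a b₀ h = (B a :: P a b₀ h) ++ [w] := by
        rw [hLdef]
        simp [hb₀]
      have hQs := hQ a b₀ h
      unfold List.Chain' at hQs
      rw [hLsplit, List.isChain_append] at hQs
      obtain ⟨hQ1, -, -⟩ := hQs
      have hMD : List.Chain' D.Adj (B a :: P a b₀ h) := by
        refine strip_aux hQ1 ?_
        intro b hb hbw
        subst hbw
        exact hwP a b₀ h (by simpa using hb)
      have hRs := hch a b₀ h
      unfold List.Chain' at hRs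
      rw [hLsplit, List.isChain_append] at hRs
      obtain ⟨-, -, hlink⟩ := hRs
      have hne' : (B a :: P a b₀ h) ≠ [] := by simp
      have hlast : (B a :: P a b₀ h).getLast? = some ((B a :: P a b₀ h).getLast hne') :=
        List.getLast?_eq_getLast hne'
      have hRl := hlink ((B a :: P a b₀ h).getLast hne') (by simp [hlast]) w (by simp)
      have hx₀u : D.Adj ((B a :: P a b₀ h).getLast hne') u := by
        rcases hRl with hadj | hsc
        · exfalso
          apply hfa
          unfold List.Chain'
          rw [hLsplit, List.isChain_append]
          refine ⟨hMD, List.isChain_singleton w, ?_⟩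
          intro y hy z hz
          simp at hz
          subst hz
          rw [hlast] at hy
          simp at hy
          subst hy
          exact hadj
        · exact hsc.1
      unfold List.Chain'
      rw [List.isChain_append]
      refine ⟨hMD, List.isChain_singleton u, ?_⟩
      intro y hy z hz
      simp at hz
      subst hz
      rw [hlast] at hy
      simp at hy
      subst hy
      exact hx₀u
    refine ⟨fun z => if z = b₀ then u else B z,
      fun a b h => if b = b₀ then P a b h else if a = b₀ then w :: P a b h else P a b h,
      ?_, ?_, ?_, ?_⟩
    · intro z₁ z₂ hz
      dsimp only at hz
      by_cases e1 : z₁ = b₀ <;> by_cases e2 : z₂ = b₀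
      · rw [e1, e2]
      · rw [if_pos e1, if_neg e2] at hz
        exact absurd hz.symm (β z₂).2
      · rw [if_neg e1, if_pos e2] at hz
        exact absurd hz (β z₁).2
      · rw [if_neg e1, if_neg e2] at hz
        exact hBinj hz
    · intro a b h
      dsimp only
      by_cases hb : b = b₀
      · subst hb
        have hab₀ : a ≠ b := fun e => hloopF b (e ▸ h)
        have hfa : ¬ List.Chain' D.Adj (L a b h) := by
          rcases hInmem a h with rfl | rfl
          · exact hfail₀
          · exact hfail₁
        have hc := hinchain a h hfa
        simp only [if_pos rfl, if_neg hab₀]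
        constructor
        · show List.Chain' D.Adj (B a :: P a b h ++ [u])
          simpa using hc
        · show (B a :: P a b h ++ [u]).Nodup
          have hnodM : (B a :: P a b h).Nodup := by
            have hnd := hnodupL a b h
            rw [show L a b h = (B a :: P a b h) ++ [B b] from by rw [hLdef],
              List.nodup_append] at hnd
            exact hnd.1
          have huM : u ∉ B a :: P a b h := by
            intro hu
            apply huL a b h
            rw [hLdef]
            simp only [List.cons_append, List.mem_cons, List.mem_append] at hu ⊢
            tauto
          rw [show B a :: P a b h ++ [u] = (B a :: P a b h) ++ [u] from by simp,
            List.nodup_append]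
          refine ⟨hnodM, List.nodup_singleton u, ?_⟩
          intro y hy
          simp only [List.mem_singleton]
          rintro _ rfl rfl
          exact huM hy
      · by_cases ha : a = b₀
        · subst ha
          simp only [if_neg hb, if_pos rfl]
          have hbd : b ≠ a := hb
          constructor
          · show List.Chain' D.Adj (u :: (w :: P a b h) ++ [B b])
            have hLc : List.Chain' D.Adj (L a b h) := by
              refine strip_aux (hQ a b h) ?_
              rw [htail]
              intro y hy hyw
              subst hyw
              rcases List.mem_append.mp hy with h' | h'
              · exact hwP a b h h'
              · simp at h'
                exact hbd (hBinj (h'.symm.trans hb₀.symm))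
            have hLform : L a b h = w :: P a b h ++ [B b] := by
              simp only [hLdef]
              rw [show B a = w from hb₀]
            rw [show u :: (w :: P a b h) ++ [B b] = u :: (w :: P a b h ++ [B b]) from by simp]
            unfold List.Chain'
            rw [List.isChain_cons]
            constructor
            · intro y hy
              simp at hy
              subst hy
              exact huw
            · rw [← hLform]
              exact hLc
          · show (u :: (w :: P a b h) ++ [B b]).Nodup
            have hLform : L a b h = w :: P a b h ++ [B b] := by
              simp only [hLdef]
              rw [show B a = w from hb₀]
            rw [show u :: (w :: P a b h) ++ [B b] = u :: (w :: P a b h ++ [B b]) from by simp,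
              List.nodup_cons, ← hLform]
            exact ⟨huL a b h, hnodupL a b h⟩
        · simp only [if_neg hb, if_neg ha]
          constructor
          · show List.Chain' D.Adj (B a :: P a b h ++ [B b])
            have : List.Chain' D.Adj (L a b h) := by
              refine strip_aux (hQ a b h) ?_
              rw [htail]
              intro y hy hyw
              subst hyw
              rcases List.mem_append.mp hy with h' | h'
              · exact hwP a b h h'
              · simp at h'
                exact hb (hBinj (h'.symm.trans hb₀.symm))
            rw [hLdef] at this
            exact this
          · show (B a :: P a b h ++ [B b]).Nodup
            have := hnodupL a b h
            rw [hLdef] at this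
            exact this
    · intro a b h x hx
      dsimp only at hx
      have hx' : x ∈ P a b h ∨ x = w := by
        by_cases hb : b = b₀
        · rw [if_pos hb] at hx
          exact Or.inl hx
        · by_cases ha : a = b₀
          · rw [if_neg hb, if_pos ha] at hx
            rcases List.mem_cons.mp hx with h' | h'
            · exact Or.inr h'
            · exact Or.inl h'
          · rw [if_neg hb, if_neg ha] at hx
            exact Or.inl hx
      rintro ⟨z, hz⟩
      dsimp only at hz
      by_cases hzb : z = b₀
      · rw [if_pos hzb] at hz
        rcases hx' with h' | h'
        · exact huP a b h (hz ▸ h')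
        · apply hwu
          rw [← h', ← hz]
      · rw [if_neg hzb] at hz
        rcases hx' with h' | h'
        · exact havoidP a b h x h' ⟨z, hz⟩
        · exact hzb (hBinj (by rw [hz, h', ← hb₀]))
    · intro a b h a' b' h' hne x hx hx'
      dsimp only at hx hx'
      have key : ∀ (c₁ c₂ : γ) (hc : F.Adj c₁ c₂),
          x ∈ (if c₂ = b₀ then P c₁ c₂ hc else if c₁ = b₀ then w :: P c₁ c₂ hc
            else P c₁ c₂ hc) →
          x ∈ P c₁ c₂ hc ∨ (x = w ∧ c₁ = b₀ ∧ c₂ = d) := by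
        intro c₁ c₂ hc hmem
        by_cases h2 : c₂ = b₀
        · rw [if_pos h2] at hmem
          exact Or.inl hmem
        · by_cases h1 : c₁ = b₀
          · rw [if_neg h2, if_pos h1] at hmem
            rcases List.mem_cons.mp hmem with h' | h'
            · exact Or.inr ⟨h', h1, hOutmem c₂ (h1 ▸ hc)⟩
            · exact Or.inl h'
          · rw [if_neg h2, if_neg h1] at hmem
            exact Or.inl hmem
      rcases key a b h hx with hm | ⟨rfl, hA1, hA2⟩
      · rcases key a' b' h' hx' with hm' | ⟨rfl, hB1, hB2⟩
        · exact hdisjP a b h a' b' h' hne x hm hm'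
        · exact hwP a b h hm
      · rcases key a' b' h' hx' with hm' | ⟨-, hB1, hB2⟩
        · exact hwP a' b' h' hm'
        · exact hne (by rw [hA1, hA2, hB1, hB2])
end

section
/- Let D be a strongly connected digraph, v ∈ V(D), and let (X,Y) be a partition of V(D) \ {v} into two non-empty sets such that there is no arc of D from X to Y and D[X] is strongly connected. Let D₁ := D[X ∪ {v}], and let D₂ be the digraph with vertex set Y ∪ {v} and arc set A(D[Y ∪ {v}]) together with an arc (y,v) for every y ∈ Y having an out-neighbor in X. Let F be a sink-free orientation of a cubic graph. Then: (1) if D₁ or D₂ contains a subdivision of F, then so does D; and (2) χ⃗(D) ≤ max{χ⃗(D₁), χ⃗(D₂)}. -/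
namespace SepRed
open Digraph' Relation

variable {V : Type}

lemma acyclicOn_of_inj {D : Digraph' V} {S : Set V} (hD : D.Loopless)
    (hS : S.Subsingleton) : D.AcyclicOn S := by
  intro w hw
  rcases Relation.TransGen.head'_iff.mp hw with ⟨c, h, -⟩
  rcases h with ⟨h1, h2, h3⟩
  have := hS h1 h2
  subst this
  exact hD w h3

lemma exists_acyclic_coloring [Fintype V] (D : Digraph' V) (hD : D.Loopless) :
    ∃ c : V → Fin (Fintype.card V), D.IsAcyclicColoring c := by
  refine ⟨Fintype.equivFin V, fun i => acyclicOn_of_inj hD ?_⟩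
  intro a ha b hb
  exact (Fintype.equivFin V).injective (ha.trans hb.symm)

lemma dichromaticNumber_exists [Fintype V] (D : Digraph' V) (hD : D.Loopless) :
    ∃ c : V → Fin D.dichromaticNumber, D.IsAcyclicColoring c := by
  have : D.dichromaticNumber ∈ {k : ℕ | ∃ c : V → Fin k, D.IsAcyclicColoring c} := by
    apply Nat.sInf_mem
    exact ⟨_, exists_acyclic_coloring D hD⟩
  exact this

lemma dichromaticNumber_le {k : ℕ} (D : Digraph' V) (c : V → Fin k)
    (hc : D.IsAcyclicColoring c) : D.dichromaticNumber ≤ k :=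
  Nat.sInf_le ⟨c, hc⟩

lemma acyclic_castLE {k m : ℕ} {D : Digraph' V} (h : k ≤ m) {c : V → Fin k}
    (hc : D.IsAcyclicColoring c) :
    D.IsAcyclicColoring (fun w => Fin.castLE h (c w)) := by
  intro i w hw
  rcases Relation.TransGen.head'_iff.mp hw with ⟨z, hstep, -⟩
  obtain ⟨h1, -, -⟩ := hstep
  have : Fin.castLE h (c w) = i := h1
  subst this
  refine hc (c w) w ?_
  have hconv : ∀ x y : V, (x ∈ {u | Fin.castLE h (c u) = Fin.castLE h (c w)} ∧
        y ∈ {u | Fin.castLE h (c u) = Fin.castLE h (c w)} ∧ D.Adj x y) →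
        (x ∈ {u | c u = c w} ∧ y ∈ {u | c u = c w} ∧ D.Adj x y) := by
    intro x y ⟨hx, hy, hxy⟩
    exact ⟨Fin.castLE_injective h hx, Fin.castLE_injective h hy, hxy⟩
  exact TransGen.mono hconv _ _ hw

lemma acyclic_equiv {k : ℕ} {D : Digraph' V} (σ : Fin k ≃ Fin k) {c : V → Fin k}
    (hc : D.IsAcyclicColoring c) :
    D.IsAcyclicColoring (fun w => σ (c w)) := by
  intro i w hw
  refine hc (σ.symm i) w (TransGen.mono ?_ _ _ hw)
  intro x y ⟨hx, hy, hxy⟩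
  refine ⟨?_, ?_, hxy⟩
  · simp only [Set.mem_setOf_eq] at hx ⊢; rw [← hx]; simp
  · simp only [Set.mem_setOf_eq] at hy ⊢; rw [← hy]; simp

/-- transfer a TransGen of a "subtype-encoded" relation on V to the subtype. -/
lemma transGen_subtype {S : Set V} (r : S → S → Prop) (t : V → V → Prop)
    (ht : ∀ x y, t x y → ∃ hx : x ∈ S, ∃ hy : y ∈ S, r ⟨x, hx⟩ ⟨y, hy⟩)
    {a b : V} (h : Relation.TransGen t a b) (ha : a ∈ S) (hb : b ∈ S) :
    Relation.TransGen r ⟨a, ha⟩ ⟨b, hb⟩ := by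
  induction h with
  | single hstep =>
    obtain ⟨hx, hy, hr⟩ := ht _ _ hstep
    exact TransGen.single hr
  | tail h' hstep ih =>
    obtain ⟨hx, hy, hr⟩ := ht _ _ hstep
    exact TransGen.tail (ih hx) hr

variable {V : Type}

lemma part2 [Fintype V] (D : Digraph' V) (hD : D.Loopless)
    (v : V) (X Y : Set V) (hpart : X ∪ Y = {v}ᶜ) (hXY : Disjoint X Y)
    (hnoarc : ∀ x ∈ X, ∀ y ∈ Y, ¬ D.Adj x y) :
    D.dichromaticNumber ≤ max (D.induce (X ∪ {v})).dichromaticNumber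
      (Digraph'.mk (fun a b : ↥(Y ∪ {v} : Set V) =>
        D.Adj a.1 b.1 ∨ (a.1 ∈ Y ∧ b.1 = v ∧ ∃ x ∈ X, D.Adj a.1 x))).dichromaticNumber := by
  classical
  set W₁ : Set V := X ∪ {v} with hW₁def
  set W₂ : Set V := Y ∪ {v} with hW₂def
  set D₂ : Digraph' ↥W₂ := Digraph'.mk (fun a b : ↥W₂ =>
      D.Adj a.1 b.1 ∨ (a.1 ∈ Y ∧ b.1 = v ∧ ∃ x ∈ X, D.Adj a.1 x)) with hD₂def
  have hvX : v ∉ X := by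
    intro h
    have : v ∈ ({v}ᶜ : Set V) := hpart ▸ Set.mem_union_left _ h
    simp at this
  have hvY : v ∉ Y := by
    intro h
    have : v ∈ ({v}ᶜ : Set V) := hpart ▸ Set.mem_union_right _ h
    simp at this
  have hmemY : ∀ w : V, w ∉ W₁ → w ∈ Y := by
    intro w hw
    have hwv : w ≠ v := fun e => hw (Or.inr (by simp [e]))
    have : w ∈ X ∪ Y := by rw [hpart]; simpa
    rcases this with h | h
    · exact absurd (Or.inl h : w ∈ W₁) hw
    · exact h
  have hYnW₁ : ∀ w : V, w ∈ Y → w ∉ W₁ := by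
    intro w hw h1
    rcases h1 with h | h
    · exact hXY.ne_of_mem h hw rfl
    · simp only [Set.mem_singleton_iff] at h; exact hvY (h ▸ hw)
  have hD₁loop : (D.induce W₁).Loopless := fun a h => hD a.1 h
  have hD₂loop : D₂.Loopless := by
    intro a h
    rcases h with h | ⟨h1, h2, -⟩
    · exact hD a.1 h
    · exact hvY (h2 ▸ h1)
  set k₁ := (D.induce W₁).dichromaticNumber with hk₁def
  set k₂ := D₂.dichromaticNumber with hk₂def
  obtain ⟨c₁, hc₁⟩ := dichromaticNumber_exists _ hD₁loop
  obtain ⟨c₂, hc₂⟩ := dichromaticNumber_exists _ hD₂loop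
  set k := max k₁ k₂ with hkdef
  have h1k : k₁ ≤ k := le_max_left _ _
  have h2k : k₂ ≤ k := le_max_right _ _
  have hvW₁ : v ∈ W₁ := Or.inr rfl
  have hvW₂ : v ∈ W₂ := Or.inr rfl
  set vX : ↥W₁ := ⟨v, hvW₁⟩
  set vY : ↥W₂ := ⟨v, hvW₂⟩
  set σ : Fin k ≃ Fin k := Equiv.swap (Fin.castLE h1k (c₁ vX)) (Fin.castLE h2k (c₂ vY)) with hσdef
  set d₁ : ↥W₁ → Fin k := fun w => Fin.castLE h1k (c₁ w) with hd₁def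
  set d₂ : ↥W₂ → Fin k := fun w => σ (Fin.castLE h2k (c₂ w)) with hd₂def
  have hd₁ : (D.induce W₁).IsAcyclicColoring d₁ := acyclic_castLE h1k hc₁
  have hd₂ : D₂.IsAcyclicColoring d₂ := acyclic_equiv σ (acyclic_castLE h2k hc₂)
  have hd₂v : d₂ vY = d₁ vX := by
    simp only [hd₂def, hσdef, hd₁def]
    exact Equiv.swap_apply_right _ _
  set c : V → Fin k := fun w =>
    if h : w ∈ W₁ then d₁ ⟨w, h⟩ else d₂ ⟨w, Or.inl (hmemY w h)⟩ with hcdef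
  have hcW₁ : ∀ (w : V) (h : w ∈ W₁), c w = d₁ ⟨w, h⟩ := fun w h => dif_pos h
  have hcY : ∀ (w : V) (h : w ∈ Y), c w = d₂ ⟨w, Or.inl h⟩ := by
    intro w h
    have h' : w ∉ W₁ := hYnW₁ w h
    simp only [hcdef, dif_neg h']
  refine le_trans (dichromaticNumber_le D c ?_) le_rfl
  intro i w hw
  set S : Set V := {u | c u = i} with hSdef
  set t : V → V → Prop := fun x y => x ∈ S ∧ y ∈ S ∧ D.Adj x y with htdef
  set t₁ : V → V → Prop := fun x y =>
    (x ∈ S ∧ x ∈ W₁) ∧ (y ∈ S ∧ y ∈ W₁) ∧ D.Adj x y with ht₁def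
  set t₂ : V → V → Prop := fun x y => ∃ hx : x ∈ W₂, ∃ hy : y ∈ W₂,
    d₂ ⟨x, hx⟩ = i ∧ d₂ ⟨y, hy⟩ = i ∧
      (D.Adj x y ∨ (x ∈ Y ∧ y = v ∧ ∃ x' ∈ X, D.Adj x x')) with ht₂def
  -- killers
  have killt₁ : ∀ u : V, ¬ Relation.TransGen t₁ u u := by
    intro u hu
    have humem : u ∈ W₁ := by
      rcases Relation.TransGen.head'_iff.mp hu with ⟨z, hz, -⟩
      exact hz.1.2
    refine hd₁ i ⟨u, humem⟩ ?_
    refine transGen_subtype _ t₁ ?_ hu humem humem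
    rintro x y ⟨⟨hxS, hx1⟩, ⟨hyS, hy1⟩, hxy⟩
    refine ⟨hx1, hy1, ?_, ?_, hxy⟩
    · show d₁ ⟨x, hx1⟩ = i; rw [← hcW₁ x hx1]; exact hxS
    · show d₁ ⟨y, hy1⟩ = i; rw [← hcW₁ y hy1]; exact hyS
  have killt₂ : ∀ u : V, ¬ Relation.TransGen t₂ u u := by
    intro u hu
    have humem : u ∈ W₂ := by
      rcases Relation.TransGen.head'_iff.mp hu with ⟨z, hz, -⟩
      exact hz.1
    refine hd₂ i ⟨u, humem⟩ ?_
    refine transGen_subtype _ t₂ ?_ hu humem humem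
    rintro x y ⟨hx, hy, hcx, hcy, hxy⟩
    exact ⟨hx, hy, hcx, hcy, hxy⟩
  by_cases hvS : v ∈ S
  · -- case v ∈ S : collapse X to v
    set φ : V → V := fun u => if u ∈ X then v else u with hφdef
    have hφW₁ : ∀ u, u ∈ W₁ → φ u = v := by
      intro u hu
      rcases hu with h | h
      · simp [hφdef, h]
      · simp only [Set.mem_singleton_iff] at h; subst h; simp [hφdef, hvX]
    have hφY : ∀ u, u ∈ Y → φ u = u := by
      intro u hu
      have : u ∉ X := fun h => hXY.ne_of_mem h hu rfl
      simp [hφdef, this]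
    have hd₂i : ∀ (h : v ∈ W₂), d₂ ⟨v, h⟩ = i := by
      intro h
      have : d₂ ⟨v, h⟩ = d₂ vY := rfl
      rw [this, hd₂v, ← hcW₁ v hvW₁]
      exact hvS
    have hstep : ∀ x y, t x y → (t₁ x y ∧ x ∈ W₁ ∧ y ∈ W₁) ∨ t₂ (φ x) (φ y) := by
      rintro x y ⟨hxS, hyS, hxy⟩
      by_cases hx1 : x ∈ W₁ <;> by_cases hy1 : y ∈ W₁
      · exact Or.inl ⟨⟨⟨hxS, hx1⟩, ⟨hyS, hy1⟩, hxy⟩, hx1, hy1⟩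
      · -- x ∈ W₁, y ∈ Y
        have hyY : y ∈ Y := hmemY y hy1
        right
        rw [hφW₁ x hx1, hφY y hyY]
        rcases hx1 with hxX | hxv
        · exact absurd hxy (hnoarc x hxX y hyY)
        · simp only [Set.mem_singleton_iff] at hxv; subst hxv
          refine ⟨hvW₂, Or.inl hyY, hd₂i hvW₂, ?_, Or.inl hxy⟩
          rw [← hcY y hyY]; exact hyS
      · -- x ∈ Y, y ∈ W₁
        have hxY : x ∈ Y := hmemY x hx1
        right
        rw [hφY x hxY, hφW₁ y hy1]
        refine ⟨Or.inl hxY, hvW₂, ?_, hd₂i hvW₂, ?_⟩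
        · rw [← hcY x hxY]; exact hxS
        · rcases hy1 with hyX | hyv
          · exact Or.inr ⟨hxY, rfl, y, hyX, hxy⟩
          · simp only [Set.mem_singleton_iff] at hyv; subst hyv; exact Or.inl hxy
      · -- x, y ∈ Y
        have hxY : x ∈ Y := hmemY x hx1
        have hyY : y ∈ Y := hmemY y hy1
        right
        rw [hφY x hxY, hφY y hyY]
        refine ⟨Or.inl hxY, Or.inl hyY, ?_, ?_, Or.inl hxy⟩
        · rw [← hcY x hxY]; exact hxS
        · rw [← hcY y hyY]; exact hyS
    have key : ∀ a b, Relation.TransGen t a b →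
        Relation.TransGen t₂ (φ a) (φ b) ∨
          (Relation.TransGen t₁ a b ∧ a ∈ W₁ ∧ b ∈ W₁) := by
      intro a b h
      induction h with
      | single hs =>
        rcases hstep _ _ hs with ⟨h1, h2, h3⟩ | h2
        · exact Or.inr ⟨Relation.TransGen.single h1, h2, h3⟩
        · exact Or.inl (Relation.TransGen.single h2)
      | tail h' hs ih =>
        rcases hstep _ _ hs with ⟨h1, hb'1, hb1⟩ | h2
        · rcases ih with ih | ⟨ih1, ih2, ih3⟩
          · left
            have e : φ _ = φ _ := (hφW₁ _ hb'1).trans (hφW₁ _ hb1).symm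
            exact e ▸ ih
          · exact Or.inr ⟨ih1.tail h1, ih2, hb1⟩
        · rcases ih with ih | ⟨ih1, ih2, ih3⟩
          · exact Or.inl (ih.tail h2)
          · left
            have e : φ _ = φ _ := (hφW₁ _ ih3).trans (hφW₁ _ ih2).symm
            exact Or.inl (e ▸ h2) |>.elim (fun h => Relation.TransGen.single h) (fun h => h)
    rcases key w w hw with h | ⟨h, hw1, -⟩
    · exact killt₂ (φ w) h
    · exact killt₁ w h
  · -- case v ∉ S
    have hwS : w ∈ S := by
      rcases Relation.TransGen.head'_iff.mp hw with ⟨z, hz, -⟩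
      exact hz.1
    have hSX : ∀ u, u ∈ S → u ≠ v := fun u hu e => hvS (e ▸ hu)
    have hmemXY : ∀ u, u ∈ S → u ∈ X ∨ u ∈ Y := by
      intro u hu
      have : u ∈ X ∪ Y := by rw [hpart]; simpa using hSX u hu
      exact this
    have F1 : ∀ a b, Relation.TransGen t a b → a ∈ X →
        Relation.TransGen t₁ a b ∧ b ∈ X := by
      intro a b h
      induction h using Relation.TransGen.head_induction_on with
      | single hs =>
        intro ha
        obtain ⟨haS, hbS, hab⟩ := hs
        rcases hmemXY _ hbS with hbX | hbY
        · exact ⟨Relation.TransGen.single ⟨⟨haS, Or.inl ha⟩, ⟨hbS, Or.inl hbX⟩, hab⟩, hbX⟩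
        · exact absurd hab (hnoarc _ ha _ hbY)
      | head hs hrest ih =>
        intro ha
        obtain ⟨haS, hcS, hac⟩ := hs
        rcases hmemXY _ hcS with hcX | hcY
        · obtain ⟨ih1, ih2⟩ := ih hcX
          exact ⟨Relation.TransGen.head ⟨⟨haS, Or.inl ha⟩, ⟨hcS, Or.inl hcX⟩, hac⟩ ih1, ih2⟩
        · exact absurd hac (hnoarc _ ha _ hcY)
    have F2 : ∀ a b, Relation.TransGen t a b → a ∈ Y → b ∈ Y →
        Relation.TransGen t₂ a b := by
      intro a b h ha
      induction h with
      | single hs =>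
        intro hb
        obtain ⟨haS, hbS, hab⟩ := hs
        refine Relation.TransGen.single ⟨Or.inl ha, Or.inl hb, ?_, ?_, Or.inl hab⟩
        · rw [← hcY _ ha]; exact haS
        · rw [← hcY _ hb]; exact hbS
      | tail h' hs ih =>
        intro hb
        obtain ⟨hb'S, hbS, hb'b⟩ := hs
        rcases hmemXY _ hb'S with hb'X | hb'Y
        · exact absurd hb'b (hnoarc _ hb'X _ hb)
        · refine (ih hb'Y).tail ⟨Or.inl hb'Y, Or.inl hb, ?_, ?_, Or.inl hb'b⟩
          · rw [← hcY _ hb'Y]; exact hb'S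
          · rw [← hcY _ hb]; exact hbS
    rcases hmemXY w hwS with hwX | hwY
    · exact killt₁ w (F1 w w hw hwX).1
    · exact killt₂ w (F2 w w hw hwY hwY)
section Lists
variable {α : Type}

lemma chain'_append_cons_last {r : α → α → Prop} {l₁ l₂ : List α} (hne : l₁ ≠ [])
    (h₁ : l₁.Chain' r) (h₂ : (l₁.getLast hne :: l₂).Chain' r) : (l₁ ++ l₂).Chain' r := by
  refine List.isChain_append.mpr ?_
  refine ⟨h₁, (List.isChain_cons.mp h₂).2, ?_⟩
  intro x hx y hy
  rw [List.getLast?_eq_getLast hne, Option.mem_some_iff] at hx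
  subst hx
  exact (List.isChain_cons.mp h₂).1 y hy

lemma exists_nodup_chain_aux (r : α → α → Prop) :
    ∀ (n : ℕ) (a b : α) (l : List α), l.length ≤ n → (a :: l).Chain' r →
      (a :: l).getLast? = some b →
      ∃ l', (a :: l').Chain' r ∧ (a :: l').getLast? = some b ∧ (a :: l').Nodup ∧
        ∀ x ∈ l', x ∈ l := by
  intro n
  induction n with
  | zero =>
    intro a b l hl _ hlast
    have : l = [] := by
      cases l with
      | nil => rfl
      | cons c t => simp at hl
    subst this
    exact ⟨[], List.isChain_singleton a, hlast, List.nodup_singleton a, by simp⟩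
  | succ n ih =>
    intro a b l hl hchain hlast
    by_cases ha : a ∈ l
    · obtain ⟨s, t, rfl⟩ := List.append_of_mem ha
      have heq : a :: (s ++ a :: t) = (a :: s) ++ (a :: t) := by simp
      have hchain' : (a :: t).Chain' r := by
        refine hchain.suffix ?_
        rw [heq]; exact ⟨a :: s, rfl⟩
      have hlast' : (a :: t).getLast? = some b := by
        rw [heq, List.getLast?_append] at hlast
        rw [List.getLast?_eq_getLast (by simp)] at hlast ⊢
        simpa using hlast
      have hlen : t.length ≤ n := by
        simp only [List.length_append, List.length_cons] at hl
        omega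
      obtain ⟨l', h1, h2, h3, h4⟩ := ih a b t hlen hchain' hlast'
      exact ⟨l', h1, h2, h3, fun x hx => by simp [h4 x hx]⟩
    · cases l with
      | nil =>
        exact ⟨[], List.isChain_singleton a, hlast, List.nodup_singleton a, by simp⟩
      | cons c t =>
        have hl' : t.length ≤ n := by simpa using hl
        obtain ⟨rac, hchain'⟩ := List.isChain_cons_cons.mp hchain
        have hlast' : (c :: t).getLast? = some b := by
          rwa [List.getLast?_cons_cons] at hlast
        obtain ⟨l', h1, h2, h3, h4⟩ := ih c b t hl' hchain' hlast'
        refine ⟨c :: l', List.isChain_cons_cons.mpr ⟨rac, h1⟩, ?_, ?_, ?_⟩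
        · rwa [List.getLast?_cons_cons]
        · refine List.nodup_cons.mpr ⟨?_, h3⟩
          intro hmem
          rcases List.mem_cons.mp hmem with h | h
          · exact ha (h ▸ List.mem_cons_self (a := c) (l := t))
          · exact ha (List.mem_cons_of_mem c (h4 a h))
        · intro x hx
          rcases List.mem_cons.mp hx with h | h
          · simp [h]
          · exact List.mem_cons_of_mem c (h4 x h)

lemma exists_dipath_list {r : α → α → Prop} {a b : α} (hne : a ≠ b)
    (h : Relation.ReflTransGen r a b) :
    ∃ l : List α, (a :: l ++ [b]).Chain' r ∧ (a :: l ++ [b]).Nodup := by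
  obtain ⟨l₀, hchain, hlast⟩ := List.exists_isChain_cons_of_relationReflTransGen h
  have hchain' : (a :: l₀).Chain' r := hchain
  have hlast' : (a :: l₀).getLast? = some b := by
    rw [List.getLast?_eq_getLast (by simp), hlast]
  obtain ⟨l', h1, h2, h3, -⟩ :=
    exists_nodup_chain_aux r l₀.length a b l₀ le_rfl hchain' hlast'
  have hl'ne : l' ≠ [] := by
    intro e
    subst e
    simp only [List.getLast?_singleton, Option.some_inj] at h2
    exact hne h2
  have hlb : l'.getLast hl'ne = b := by
    rw [List.getLast?_eq_getLast (List.cons_ne_nil a l'),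
      List.getLast_cons hl'ne] at h2
    exact Option.some_inj.mp h2
  have e : (a :: l'.dropLast) ++ [b] = a :: l' := by
    rw [List.cons_append]
    congr 1
    rw [← hlb]
    exact List.dropLast_append_getLast hl'ne
  exact ⟨l'.dropLast, by rw [e]; exact h1, by rw [e]; exact h3⟩

end Lists
section Part1

variable {γ : Type}

/-- The auxiliary digraph `D₂`. -/
def D2 (D : Digraph' V) (v : V) (X Y : Set V) : Digraph' ↥(Y ∪ {v} : Set V) :=
  ⟨fun a b => D.Adj a.1 b.1 ∨ (a.1 ∈ Y ∧ b.1 = v ∧ ∃ x ∈ X, D.Adj a.1 x)⟩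

variable {D : Digraph' V} {v : V} {X Y : Set V}

/-- the special vertex of `D₂`. -/
def vhat (v : V) (Y : Set V) : ↥(Y ∪ {v} : Set V) := ⟨v, Or.inr rfl⟩

lemma val_mem_Y {w : ↥(Y ∪ {v} : Set V)} (hw : w ≠ vhat v Y) : w.1 ∈ Y := by
  rcases w.2 with h | h
  · exact h
  · exact absurd (Subtype.ext (by simpa [vhat] using h)) hw

lemma genuine_of_ne {a b : ↥(Y ∪ {v} : Set V)} (h : (D2 D v X Y).Adj a b)
    (hb : b ≠ vhat v Y) : D.Adj a.1 b.1 := by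
  rcases h with h | ⟨-, h2, -⟩
  · exact h
  · exact absurd (Subtype.ext h2) hb

lemma genuine_from_vhat (hvY : v ∉ Y) {b : ↥(Y ∪ {v} : Set V)}
    (h : (D2 D v X Y).Adj (vhat v Y) b) : D.Adj v b.1 := by
  rcases h with h | ⟨h1, -, -⟩
  · exact h
  · exact absurd h1 hvY

/-- upgrade a `D₂`-chain with no `v̂` in its tail to a genuine `D`-chain. -/
lemma chainD_of_chainD2 (hvY : v ∉ Y) :
    ∀ l : List ↥(Y ∪ {v} : Set V), l.Chain' (D2 D v X Y).Adj →
      (∀ w ∈ l.tail, w ≠ vhat v Y) → l.Chain' (fun a b => D.Adj a.1 b.1) := by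
  intro l
  induction l with
  | nil => intro _ _; exact List.isChain_nil
  | cons a t ih =>
    intro hchain htail
    cases t with
    | nil => exact List.isChain_singleton a
    | cons b t' =>
      obtain ⟨hab, hrest⟩ := List.isChain_cons_cons.mp hchain
      refine List.isChain_cons_cons.mpr ⟨?_, ?_⟩
      · exact genuine_of_ne hab (htail b (by simp))
      · refine ih hrest ?_
        intro w hw
        exact htail w (List.mem_cons_of_mem _ hw)

lemma pathToV (hDs : D.StronglyConnected) (hvX : v ∉ X)
    (hpart : X ∪ Y = {v}ᶜ) (hnoarc : ∀ x ∈ X, ∀ y ∈ Y, ¬ D.Adj x y)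
    {x : V} (hx : x ∈ X) :
    ∃ l : List V, (x :: l ++ [v]).Chain' D.Adj ∧ (x :: l ++ [v]).Nodup ∧
      ∀ w ∈ l, w ∈ X := by
  have hne : x ≠ v := fun e => hvX (e ▸ hx)
  obtain ⟨l, hchain, hnodup⟩ := exists_dipath_list hne (hDs x v)
  refine ⟨l, hchain, hnodup, ?_⟩
  clear hne
  induction l generalizing x with
  | nil => intro w hw; simp at hw
  | cons c t ih =>
    have hcadj : D.Adj x c := by
      have := List.isChain_cons_cons.mp hchain
      exact this.1
    have hcv : c ≠ v := by
      intro e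
      have hcnot : c ∉ t ++ [v] :=
        (List.nodup_cons.mp ((List.nodup_cons.mp hnodup).2)).1
      rw [e] at hcnot
      exact hcnot (by simp)
    have hcX : c ∈ X := by
      have hcYor : c ∈ X ∪ Y := by
        rw [hpart]; simpa using hcv
      rcases hcYor with h | h
      · exact h
      · exact absurd hcadj (hnoarc x hx c h)
    intro w hw
    rcases List.mem_cons.mp hw with h | h
    · exact h ▸ hcX
    · exact ih hcX (List.isChain_cons_cons.mp hchain).2 (List.nodup_cons.mp hnodup).2 w h

/-- replacement path for an arc of `D₂` pointing at `v̂`. -/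
lemma exists_repl (hDs : D.StronglyConnected) (hvX : v ∉ X) (hvY : v ∉ Y)
    (hpart : X ∪ Y = {v}ᶜ) (hnoarc : ∀ x ∈ X, ∀ y ∈ Y, ¬ D.Adj x y)
    (hXY : Disjoint X Y)
    {u : ↥(Y ∪ {v} : Set V)} (hu : (D2 D v X Y).Adj u (vhat v Y))
    (hune : u ≠ vhat v Y) :
    ∃ R : List V, R ≠ [] ∧ (u.1 :: R).Chain' D.Adj ∧ (u.1 :: R).Nodup ∧
      R.getLast? = some v ∧ ∀ w ∈ R.dropLast, w ∈ X := by
  have huY : u.1 ∈ Y := val_mem_Y hune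
  rcases hu with h | ⟨-, -, x, hxX, hux⟩
  · refine ⟨[v], by simp, ?_, ?_, by simp, by simp⟩
    · exact List.isChain_pair.mpr h
    · refine List.nodup_cons.mpr ⟨?_, List.nodup_singleton v⟩
      simp only [List.mem_singleton]
      intro e; exact hvY (e ▸ huY)
  · obtain ⟨l, hchain, hnodup, hlX⟩ := pathToV hDs hvX hpart hnoarc hxX
    refine ⟨x :: l ++ [v], by simp, ?_, ?_, ?_, ?_⟩
    · exact List.isChain_cons_cons.mpr ⟨hux, hchain⟩
    · refine List.nodup_cons.mpr ⟨?_, hnodup⟩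
      intro hmem
      rcases List.mem_cons.mp hmem with h | h
      · exact hXY.ne_of_mem hxX huY h.symm
      · rcases List.mem_append.mp h with h | h
        · exact hXY.ne_of_mem (hlX _ h) huY rfl
        · simp only [List.mem_singleton] at h
          exact hvY (h ▸ huY)
    · rw [show (x :: l ++ [v] : List V) = (x :: l) ++ [v] by simp,
        List.getLast?_concat]
    · rw [show (x :: l ++ [v] : List V) = (x :: l) ++ [v] by simp,
        List.dropLast_concat]
      intro w hw
      rcases List.mem_cons.mp hw with h | h
      · exact h ▸ hxX
      · exact hlX w h

end Part1
section Push

variable {γ : Type}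

lemma getLast?_ne_nil {α : Type} {l : List α} {x : α} (h : l.getLast? = some x) :
    l ≠ [] := by
  intro e; subst e; simp at h

lemma chain'_append_of_getLast? {α : Type} {r : α → α → Prop} {l₁ l₂ : List α} {m : α}
    (h1 : l₁.getLast? = some m) (hc1 : l₁.Chain' r) (hc2 : (m :: l₂).Chain' r) :
    (l₁ ++ l₂).Chain' r := by
  have hne : l₁ ≠ [] := getLast?_ne_nil h1
  refine chain'_append_cons_last hne hc1 ?_
  have : l₁.getLast hne = m := by
    rw [List.getLast?_eq_getLast hne] at h1
    exact Option.some_inj.mp h1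
  rwa [this]

lemma mem_dropLast_or_getLast? {α : Type} {l : List α} {x m : α}
    (hm : l.getLast? = some m) (hx : x ∈ l) : x ∈ l.dropLast ∨ x = m := by
  have hne : l ≠ [] := getLast?_ne_nil hm
  have hlast : l.getLast hne = m := by
    rw [List.getLast?_eq_getLast hne] at hm
    exact Option.some_inj.mp hm
  have : l = l.dropLast ++ [m] := by
    conv_lhs => rw [← List.dropLast_append_getLast hne, hlast]
  rw [this] at hx
  rcases List.mem_append.mp hx with h | h
  · exact Or.inl h
  · exact Or.inr (by simpa using h)

/-- Push a path system through an injective vertex map. -/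
lemma push_chains {V' : Type} {D : Digraph' V} (f : V' → V) (hf : Function.Injective f)
    {F : Digraph' γ} (β : γ → V') (p : ∀ a b, F.Adj a b → List V')
    (hinj : Function.Injective β)
    (hpath : ∀ a b (h : F.Adj a b),
      ((β a :: p a b h ++ [β b]).Chain' (fun x y => D.Adj (f x) (f y))) ∧
        (β a :: p a b h ++ [β b]).Nodup)
    (havoid : ∀ a b (h : F.Adj a b) (x : V'), x ∈ p a b h → x ∉ Set.range β)
    (hdisj : ∀ a b (h : F.Adj a b) (a' b' : γ) (h' : F.Adj a' b'),
      (a, b) ≠ (a', b') → ∀ x, x ∈ p a b h → x ∉ p a' b' h') :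
    D.ContainsSubdivision F := by
  refine ⟨fun z => f (β z), fun a b h => (p a b h).map f, hf.comp hinj, ?_, ?_, ?_⟩
  · intro a b h
    have he : f (β a) :: (p a b h).map f ++ [f (β b)] =
        (β a :: p a b h ++ [β b]).map f := by simp
    constructor
    · rw [he]; refine (List.isChain_map _).mpr ?_
      exact (hpath a b h).1
    · rw [he]
      exact (hpath a b h).2.map hf
  · rintro a b h x hx ⟨z, hz⟩
    obtain ⟨w, hw, rfl⟩ := List.mem_map.mp hx
    exact havoid a b h w hw ⟨z, hf hz⟩
  · intro a b h a' b' h' hne x hx hx'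
    obtain ⟨w, hw, rfl⟩ := List.mem_map.mp hx
    obtain ⟨w', hw', he⟩ := List.mem_map.mp hx'
    exact hdisj a b h a' b' h' hne w hw (hf he ▸ hw')

end Push
section Mid

variable {γ : Type} {D : Digraph' V} {v : V} {X Y : Set V}

lemma vals_mem_Y {l : List ↥(Y ∪ {v} : Set V)} (hl : ∀ w ∈ l, w ≠ vhat v Y)
    {x : V} (hx : x ∈ l.map Subtype.val) : x ∈ Y := by
  obtain ⟨w, hw, rfl⟩ := List.mem_map.mp hx
  exact val_mem_Y (hl w hw)

lemma Y_not_XV (hXY : Disjoint X Y) (hvY : v ∉ Y) {x : V} (hx : x ∈ Y) :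
    ¬ (x ∈ X ∨ x = v) := by
  rintro (h | rfl)
  · exact hXY.ne_of_mem h hx rfl
  · exact hvY hx

lemma Lmid (hDs : D.StronglyConnected) (hvX : v ∉ X) (hvY : v ∉ Y)
    (hpart : X ∪ Y = {v}ᶜ) (hXY : Disjoint X Y)
    (hnoarc : ∀ x ∈ X, ∀ y ∈ Y, ¬ D.Adj x y)
    {F : Digraph' γ}
    (β : γ → ↥(Y ∪ {v} : Set V)) (p : ∀ a b, F.Adj a b → List ↥(Y ∪ {v} : Set V))
    (hinj : Function.Injective β)
    (hpath : ∀ a b (h : F.Adj a b), (D2 D v X Y).IsDipath (β a) (p a b h) (β b))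
    (havoid : ∀ a b (h : F.Adj a b) (x : ↥(Y ∪ {v} : Set V)),
      x ∈ p a b h → x ∉ Set.range β)
    (hdisj : ∀ a b (h : F.Adj a b) (a' b' : γ) (h' : F.Adj a' b'),
      (a, b) ≠ (a', b') → ∀ x, x ∈ p a b h → x ∉ p a' b' h')
    (a₀ b₀ : γ) (h₀ : F.Adj a₀ b₀) (hmem : vhat v Y ∈ p a₀ b₀ h₀) :
    D.ContainsSubdivision F := by
  classical
  set vh : ↥(Y ∪ {v} : Set V) := vhat v Y with hvhdef
  -- v̂ is not a branch vertex
  have hβne : ∀ z, β z ≠ vh := by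
    intro z hz
    exact havoid a₀ b₀ h₀ vh hmem ⟨z, hz⟩
  -- other paths do not contain v̂
  have hother : ∀ a b (h : F.Adj a b), (a, b) ≠ (a₀, b₀) → ∀ w ∈ p a b h, w ≠ vh := by
    intro a b h hne w hw he
    exact hdisj a₀ b₀ h₀ a b h hne.symm vh hmem (he ▸ hw)
  -- decompose the distinguished path
  obtain ⟨s, t, hst⟩ := List.append_of_mem hmem
  obtain ⟨hch, hnd⟩ := hpath a₀ b₀ h₀
  rw [hst] at hch hnd
  have hsplit : (β a₀ :: (s ++ vh :: t)) ++ [β b₀] =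
      (β a₀ :: s) ++ (vh :: (t ++ [β b₀])) := by simp
  rw [hsplit] at hch hnd
  have hchsplit := List.isChain_append.mp hch
  obtain ⟨hch1, hch2, hlink⟩ := hchsplit
  obtain ⟨nd1, nd2, disj12⟩ := List.nodup_append.mp hnd
  set u : ↥(Y ∪ {v} : Set V) := (β a₀ :: s).getLast (by simp) with hudef
  have hlinku : (D2 D v X Y).Adj u vh := by
    exact hlink u rfl vh rfl
  have hvh_first : vh ∉ β a₀ :: s := fun h => disj12 _ h _ (by simp) rfl
  have hvh_t : vh ∉ t ++ [β b₀] := (List.nodup_cons.mp nd2).1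
  have hune : u ≠ vh := fun h => hvh_first (h ▸ List.getLast_mem _)
  obtain ⟨R, hRne, hRch, hRnd, hRlast, hRX⟩ :=
    exists_repl hDs hvX hvY hpart hnoarc hXY hlinku hune
  have hRmem : ∀ w ∈ R, w ∈ X ∨ w = v := by
    intro w hw
    rcases mem_dropLast_or_getLast? hRlast hw with h | h
    · exact Or.inl (hRX w h)
    · exact Or.inr h
  -- first-part and second-part facts
  have hs_ne : ∀ w ∈ β a₀ :: s, w ≠ vh := fun w hw he => hvh_first (he ▸ hw)
  have ht_ne : ∀ w ∈ t ++ [β b₀], w ≠ vh := fun w hw he => hvh_t (he ▸ hw)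
  set newp : List V := s.map Subtype.val ++ R ++ t.map Subtype.val with hnewpdef
  set p' : ∀ a b, F.Adj a b → List V := fun a b h =>
    if a = a₀ ∧ b = b₀ then newp else (p a b h).map Subtype.val with hp'def
  refine ⟨fun z => (β z).1, p', Subtype.val_injective.comp hinj, ?_, ?_, ?_⟩
  · -- dipaths
    intro a b h
    by_cases hq : a = a₀ ∧ b = b₀
    · obtain ⟨rfl, rfl⟩ := hq
      have hp'eq : p' a b h = newp := if_pos ⟨rfl, rfl⟩
      rw [hp'eq]
      -- the modified path
      have hfull : (β a).1 :: newp ++ [(β b).1] =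
          (((β a :: s).map Subtype.val) ++ R) ++ ((t ++ [β b]).map Subtype.val) := by
        simp [hnewpdef]
      constructor
      · rw [hfull]
        -- chain
        have hcL : ((β a :: s).map Subtype.val).Chain' D.Adj := by
          refine (List.isChain_map _).mpr ?_
          exact chainD_of_chainD2 hvY _ hch1 (fun w hw => hs_ne w (List.mem_cons_of_mem _ hw))
        have hcLlast : ((β a :: s).map Subtype.val).getLast? = some u.1 := by
          rw [List.getLast?_map, List.getLast?_eq_getLast (by simp), ← hudef]
          rfl
        have hcLR : (((β a :: s).map Subtype.val) ++ R).Chain' D.Adj :=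
          chain'_append_of_getLast? hcLlast hcL hRch
        have hcLRlast : (((β a :: s).map Subtype.val) ++ R).getLast? = some v := by
          rw [List.getLast?_append, hRlast]
          rfl
        refine chain'_append_of_getLast? hcLRlast hcLR ?_
        have : (v :: (t ++ [β b]).map Subtype.val) = ((vh :: (t ++ [β b])).map Subtype.val) := by
          simp [hvhdef, vhat]
        rw [this]; refine (List.isChain_map _).mpr ?_
        exact chainD_of_chainD2 hvY _ hch2 ht_ne
      · rw [hfull]
        -- nodup
        rw [List.nodup_append, List.nodup_append]
        refine ⟨⟨nd1.map Subtype.val_injective, (List.nodup_cons.mp hRnd).2, ?_⟩,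
          (List.nodup_cons.mp nd2).2.map Subtype.val_injective, ?_⟩
        · intro x hx y hx' hxy; rw [← hxy] at hx'
          exact Y_not_XV hXY hvY (vals_mem_Y hs_ne hx) (hRmem x hx')
        · intro x hx y hx' hxy; rw [← hxy] at hx'
          have hx'Y : x ∈ Y := vals_mem_Y ht_ne hx'
          rcases List.mem_append.mp hx with h | h
          · obtain ⟨w, hw, rfl⟩ := List.mem_map.mp h
            obtain ⟨w', hw', he⟩ := List.mem_map.mp hx'
            exact disj12 _ hw _ (List.mem_cons_of_mem _ (Subtype.val_injective he ▸ hw')) rfl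
          · exact Y_not_XV hXY hvY hx'Y (hRmem x h)
    · -- unmodified path
      have hp'eq : p' a b h = (p a b h).map Subtype.val := if_neg hq
      rw [hp'eq]
      have hab_ne : (a, b) ≠ (a₀, b₀) := by
        intro e
        exact hq ⟨congrArg Prod.fst e, congrArg Prod.snd e⟩
      obtain ⟨hc, hn⟩ := hpath a b h
      have he : (β a).1 :: (p a b h).map Subtype.val ++ [(β b).1] =
          (β a :: p a b h ++ [β b]).map Subtype.val := by simp
      constructor
      · rw [he]; refine (List.isChain_map _).mpr ?_
        refine chainD_of_chainD2 hvY _ hc ?_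
        intro w hw
        simp only [List.cons_append, List.tail_cons] at hw
        rcases List.mem_append.mp hw with h' | h'
        · exact hother a b h hab_ne w h'
        · simp only [List.mem_singleton] at h'
          exact h' ▸ hβne b
      · rw [he]
        exact hn.map Subtype.val_injective
  · -- avoid range
    intro a b h x hx ⟨z, hz⟩
    have hz' : (β z).1 = x := hz
    by_cases hq : a = a₀ ∧ b = b₀
    · rw [hp'def] at hx
      simp only [if_pos hq] at hx
      rcases List.mem_append.mp hx with h' | h'
      · rcases List.mem_append.mp h' with h'' | h''
        · obtain ⟨w, hw, rfl⟩ := List.mem_map.mp h''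
          refine havoid a₀ b₀ h₀ w ?_ ⟨z, Subtype.val_injective (hz'.trans rfl ▸ hz')⟩
          rw [hst]; exact List.mem_append.mpr (Or.inl hw)
        · -- x ∈ R
          have : (β z).1 ∈ Y := val_mem_Y (hβne z)
          rw [hz'] at this
          exact Y_not_XV hXY hvY this (hRmem x h'')
      · obtain ⟨w, hw, rfl⟩ := List.mem_map.mp h'
        refine havoid a₀ b₀ h₀ w ?_ ⟨z, Subtype.val_injective hz'⟩
        rw [hst]
        exact List.mem_append.mpr (Or.inr (List.mem_cons_of_mem _ hw))
    · rw [hp'def] at hx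
      simp only [if_neg hq] at hx
      obtain ⟨w, hw, rfl⟩ := List.mem_map.mp hx
      exact havoid a b h w hw ⟨z, Subtype.val_injective hz'⟩
  · -- cross-disjointness
    intro a b h a' b' h' hne x hx hx'
    -- helper to interpret membership
    have interp : ∀ (A B : γ) (H : F.Adj A B), x ∈ p' A B H →
        ((A, B) = (a₀, b₀) ∧ x ∈ newp) ∨
          ((A, B) ≠ (a₀, b₀) ∧ ∃ w ∈ p A B H, (w : V) = x) := by
      intro A B H hxm
      by_cases hq : A = a₀ ∧ B = b₀
      · rw [hp'def] at hxm
        simp only [if_pos hq] at hxm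
        exact Or.inl ⟨by rw [hq.1, hq.2], hxm⟩
      · rw [hp'def] at hxm
        simp only [if_neg hq] at hxm
        obtain ⟨w, hw, he⟩ := List.mem_map.mp hxm
        refine Or.inr ⟨?_, w, hw, he⟩
        intro e
        exact hq ⟨congrArg Prod.fst e, congrArg Prod.snd e⟩
    -- membership in newp: either an old internal vertex of p a₀ b₀, or in R
    have hnewp_mem : x ∈ newp →
        (∃ w ∈ p a₀ b₀ h₀, (w : V) = x ∧ w ≠ vh) ∨ (x ∈ X ∨ x = v) := by
      intro hxm
      rcases List.mem_append.mp hxm with h1 | h1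
      · rcases List.mem_append.mp h1 with h2 | h2
        · obtain ⟨w, hw, rfl⟩ := List.mem_map.mp h2
          refine Or.inl ⟨w, ?_, rfl, fun e => hvh_first (e ▸ List.mem_cons_of_mem _ hw)⟩
          rw [hst]; exact List.mem_append.mpr (Or.inl hw)
        · exact Or.inr (hRmem x h2)
      · obtain ⟨w, hw, rfl⟩ := List.mem_map.mp h1
        refine Or.inl ⟨w, ?_, rfl, fun e => hvh_t (e ▸ List.mem_append.mpr (Or.inl hw))⟩
        rw [hst]
        exact List.mem_append.mpr (Or.inr (List.mem_cons_of_mem _ hw))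
    rcases interp a b h hx with ⟨he1, hm1⟩ | ⟨he1, w1, hw1, hv1⟩ <;>
      rcases interp a' b' h' hx' with ⟨he2, hm2⟩ | ⟨he2, w2, hw2, hv2⟩
    · exact hne (he1.trans he2.symm)
    · rcases hnewp_mem hm1 with ⟨w, hwmem, hwe, -⟩ | hXv
      · refine hdisj a₀ b₀ h₀ a' b' h' (fun e => he2 e.symm) w hwmem ?_
        have : w = w2 := Subtype.val_injective (hwe.trans hv2.symm)
        exact this ▸ hw2
      · have : (w2 : V) ∈ Y := val_mem_Y (hother a' b' h' he2 w2 hw2)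
        rw [hv2] at this
        exact Y_not_XV hXY hvY this hXv
    · rcases hnewp_mem hm2 with ⟨w, hwmem, hwe, -⟩ | hXv
      · refine hdisj a b h a₀ b₀ h₀ he1 w1 hw1 ?_
        have : w1 = w := Subtype.val_injective (hv1.trans hwe.symm)
        exact this ▸ hwmem
      · have : (w1 : V) ∈ Y := val_mem_Y (hother a b h he1 w1 hw1)
        rw [hv1] at this
        exact Y_not_XV hXY hvY this hXv
    · refine hdisj a b h a' b' h' hne w1 hw1 ?_
      have : w1 = w2 := Subtype.val_injective (hv1.trans hv2.symm)
      exact this ▸ hw2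

end Mid
section Star

variable {γ : Type} {D : Digraph' V} {v : V} {X Y : Set V}

lemma Lstar (hvY : v ∉ Y) (hXY : Disjoint X Y)
    {F : Digraph' γ} (hFloop : F.Loopless)
    (β : γ → ↥(Y ∪ {v} : Set V)) (p : ∀ a b, F.Adj a b → List ↥(Y ∪ {v} : Set V))
    (hinj : Function.Injective β)
    (hpath : ∀ a b (h : F.Adj a b), (D2 D v X Y).IsDipath (β a) (p a b h) (β b))
    (havoid : ∀ a b (h : F.Adj a b) (x : ↥(Y ∪ {v} : Set V)),
      x ∈ p a b h → x ∉ Set.range β)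
    (hdisj : ∀ a b (h : F.Adj a b) (a' b' : γ) (h' : F.Adj a' b'),
      (a, b) ≠ (a', b') → ∀ x, x ∈ p a b h → x ∉ p a' b' h')
    (b₀ : γ) (hb₀ : β b₀ = vhat v Y)
    (c : V) (hcXV : c ∈ X ∨ c = v)
    (Rin : ∀ a, F.Adj a b₀ → List V) (Rout : List V)
    (hRinX : ∀ a h, ∀ w ∈ Rin a h, w ∈ X)
    (hRinChain : ∀ a (h : F.Adj a b₀),
      (((β a :: p a b₀ h).getLast (by simp)).1 :: (Rin a h ++ [c])).Chain' D.Adj)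
    (hRinNodup : ∀ a h, (Rin a h).Nodup)
    (hRinc : ∀ a h, c ∉ Rin a h)
    (hRinDisj : ∀ a h a' h', a ≠ a' → ∀ w, w ∈ Rin a h → w ∉ Rin a' h')
    (hRoutChain : (c :: Rout).Chain' D.Adj)
    (hRoutLast : (c :: Rout).getLast? = some v)
    (hRoutNodup : (c :: Rout).Nodup)
    (hRoutMem : ∀ w ∈ Rout, w ∈ X ∨ w = v)
    (hRoutRin : ∀ a h w, w ∈ Rin a h → w ∉ Rout)
    (hout : Rout ≠ [] → ∀ b b', F.Adj b₀ b → F.Adj b₀ b' → b = b') :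
    D.ContainsSubdivision F := by
  classical
  set vh : ↥(Y ∪ {v} : Set V) := vhat v Y with hvhdef
  have hpnotvh : ∀ a b (h : F.Adj a b) w, w ∈ p a b h → w ≠ vh := by
    intro a b h w hw he
    exact havoid a b h w hw ⟨b₀, hb₀.trans he.symm⟩
  have hβne : ∀ z, z ≠ b₀ → β z ≠ vh := by
    intro z hz he
    exact hz (hinj (he.trans hb₀.symm))
  have hβY : ∀ z, z ≠ b₀ → (β z).1 ∈ Y := fun z hz => val_mem_Y (hβne z hz)
  have hcY : c ∉ Y := fun h => Y_not_XV hXY hvY h hcXV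
  have hpY : ∀ a b (h : F.Adj a b) (w : ↥(Y ∪ {v} : Set V)), w ∈ p a b h → w.1 ∈ Y :=
    fun a b h w hw => val_mem_Y (hpnotvh a b h w hw)
  have hcRout : c ∉ Rout := (List.nodup_cons.mp hRoutNodup).1
  have hvnotrange : ∀ (w : V), w ∈ Rout → w = v → c ≠ v := by
    intro w hw he hc
    exact hcRout (hc ▸ he ▸ hw)
  set β' : γ → V := fun z => if z = b₀ then c else (β z).1 with hβ'def
  set p' : ∀ a b, F.Adj a b → List V := fun a b h =>
    if hb : b = b₀ then (p a b h).map Subtype.val ++ Rin a (hb ▸ h)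
    else if ha : a = b₀ then Rout ++ (p a b h).map Subtype.val
    else (p a b h).map Subtype.val with hp'def
  have hβ'b₀ : β' b₀ = c := if_pos rfl
  have hβ'ne : ∀ z, z ≠ b₀ → β' z = (β z).1 := fun z hz => if_neg hz
  -- membership interpretation for p'
  have interp : ∀ A B (H : F.Adj A B) (x : V), x ∈ p' A B H →
      (∃ w ∈ p A B H, (w : V) = x) ∨
      (B = b₀ ∧ ∃ (hh : F.Adj A b₀), x ∈ Rin A hh) ∨
      (A = b₀ ∧ x ∈ Rout) := by
    intro A B H x hx
    by_cases hb : B = b₀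
    · subst hb
      rw [hp'def] at hx
      simp only [dif_pos rfl] at hx
      rcases List.mem_append.mp hx with h1 | h1
      · obtain ⟨w, hw, he⟩ := List.mem_map.mp h1
        exact Or.inl ⟨w, hw, he⟩
      · exact Or.inr (Or.inl ⟨rfl, H, h1⟩)
    · by_cases ha : A = b₀
      · subst ha
        rw [hp'def] at hx
        simp only [dif_neg hb, dif_pos rfl] at hx
        rcases List.mem_append.mp hx with h1 | h1
        · exact Or.inr (Or.inr ⟨rfl, h1⟩)
        · obtain ⟨w, hw, he⟩ := List.mem_map.mp h1
          exact Or.inl ⟨w, hw, he⟩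
      · rw [hp'def] at hx
        simp only [dif_neg hb, dif_neg ha] at hx
        obtain ⟨w, hw, he⟩ := List.mem_map.mp hx
        exact Or.inl ⟨w, hw, he⟩
  refine ⟨β', p', ?_, ?_, ?_, ?_⟩
  · -- injectivity
    intro z₁ z₂ he
    by_cases h1 : z₁ = b₀ <;> by_cases h2 : z₂ = b₀
    · exact h1.trans h2.symm
    · rw [h1, hβ'b₀, hβ'ne z₂ h2] at he
      exact absurd (he ▸ hβY z₂ h2) hcY
    · rw [h2, hβ'b₀, hβ'ne z₁ h1] at he
      exact absurd (he ▸ hβY z₁ h1) hcY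
    · rw [hβ'ne z₁ h1, hβ'ne z₂ h2] at he
      exact hinj (Subtype.val_injective he)
  · -- dipaths
    intro a b h
    by_cases hb : b = b₀
    · subst hb
      have ha : a ≠ b := fun e => hFloop b (e ▸ h)
      have hp'eq : p' a b h = (p a b h).map Subtype.val ++ Rin a h := by
        simp only [hp'def]; exact dif_pos trivial
      rw [hp'eq, hβ'b₀, hβ'ne a ha]
      obtain ⟨hc1, hn1⟩ := hpath a b h
      rw [hb₀] at hc1 hn1
      -- old prefix
      have hpre : (β a :: p a b h).Chain' (D2 D v X Y).Adj :=
        hc1.prefix ⟨[vh], by simp⟩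
      have hpreD : ((β a :: p a b h).map Subtype.val).Chain' D.Adj := by
        refine (List.isChain_map _).mpr ?_
        exact chainD_of_chainD2 hvY _ hpre
          (fun w hw => hpnotvh a b h w (by simpa using hw))
      have hprelast : ((β a :: p a b h).map Subtype.val).getLast? =
          some ((β a :: p a b h).getLast (by simp)).1 := by
        rw [List.getLast?_map, List.getLast?_eq_getLast (by simp)]
        rfl
      have hfull : (β a).1 :: ((p a b h).map Subtype.val ++ Rin a h) ++ [c] =
          ((β a :: p a b h).map Subtype.val) ++ (Rin a h ++ [c]) := by simp
      constructor
      · rw [hfull]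
        exact chain'_append_of_getLast? hprelast hpreD (hRinChain a h)
      · rw [hfull, List.nodup_append]
        refine ⟨?_, ?_, ?_⟩
        · refine List.Nodup.map Subtype.val_injective ?_
          exact hn1.sublist (by simp)
        · rw [List.nodup_append]
          refine ⟨hRinNodup a h, List.nodup_singleton c, ?_⟩
          intro x hx y hy e
          rw [List.mem_singleton] at hy
          rw [hy] at e
          exact hRinc a h (e ▸ hx)
        · intro x hx y hx' hxy; rw [← hxy] at hx'
          have hxY : x ∈ Y := by
            obtain ⟨w, hw, rfl⟩ := List.mem_map.mp hx
            rcases List.mem_cons.mp hw with h' | h'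
            · exact h' ▸ hβY a ha
            · exact hpY a b h w h'
          rcases List.mem_append.mp hx' with h' | h'
          · exact hXY.ne_of_mem (hRinX a h x h') hxY rfl
          · simp only [List.mem_singleton] at h'
            exact hcY (h' ▸ hxY)
    · by_cases ha : a = b₀
      · subst ha
        have hbne : b ≠ a := hb
        have hp'eq : p' a b h = Rout ++ (p a b h).map Subtype.val := by
          simp only [hp'def, dif_neg hb]; exact dif_pos trivial
        rw [hp'eq, hβ'b₀, hβ'ne b hbne]
        obtain ⟨hc1, hn1⟩ := hpath a b h
        rw [hb₀] at hc1 hn1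
        have htl : ((p a b h ++ [β b]).map Subtype.val).Chain' D.Adj ∧
            (v :: (p a b h ++ [β b]).map Subtype.val).Chain' D.Adj := by
          have hupg : (vh :: (p a b h ++ [β b])).Chain' (fun x y :
              ↥(Y ∪ {v} : Set V) => D.Adj x.1 y.1) := by
            refine chainD_of_chainD2 hvY _ (by simpa using hc1) ?_
            intro w hw
            simp only [List.tail_cons] at hw
            rcases List.mem_append.mp hw with h' | h'
            · exact hpnotvh a b h w h'
            · simp only [List.mem_singleton] at h'
              exact h' ▸ hβne b hbne
          constructor
          · refine (List.isChain_map _).mpr ?_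
            exact hupg.suffix ⟨[vh], rfl⟩
          · have : (v :: (p a b h ++ [β b]).map Subtype.val) =
                ((vh :: (p a b h ++ [β b])).map Subtype.val) := by simp [hvhdef, vhat]
            rw [this]; refine (List.isChain_map _).mpr ?_
            exact hupg
        have hfull : c :: (Rout ++ (p a b h).map Subtype.val) ++ [(β b).1] =
            (c :: Rout) ++ ((p a b h ++ [β b]).map Subtype.val) := by simp
        constructor
        · rw [hfull]
          exact chain'_append_of_getLast? hRoutLast hRoutChain htl.2
        · rw [hfull, List.nodup_append]
          refine ⟨hRoutNodup, ?_, ?_⟩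
          · refine List.Nodup.map Subtype.val_injective ?_
            exact (List.nodup_cons.mp (by simpa using hn1)).2
          · intro x hx y hx' hxy; rw [← hxy] at hx'
            have hxY : x ∈ Y := by
              obtain ⟨w, hw, rfl⟩ := List.mem_map.mp hx'
              rcases List.mem_append.mp hw with h' | h'
              · exact hpY a b h w h'
              · simp only [List.mem_singleton] at h'
                exact h' ▸ hβY b hbne
            rcases List.mem_cons.mp hx with h' | h'
            · exact hcY (h' ▸ hxY)
            · exact Y_not_XV hXY hvY hxY (hRoutMem x h')
      · -- unmodified
        have hp'eq : p' a b h = (p a b h).map Subtype.val := by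
          simp only [hp'def, dif_neg hb, dif_neg ha]
        rw [hp'eq, hβ'ne a ha, hβ'ne b hb]
        obtain ⟨hc1, hn1⟩ := hpath a b h
        have he : (β a).1 :: (p a b h).map Subtype.val ++ [(β b).1] =
            (β a :: p a b h ++ [β b]).map Subtype.val := by simp
        constructor
        · rw [he]; refine (List.isChain_map _).mpr ?_
          refine chainD_of_chainD2 hvY _ hc1 ?_
          intro w hw
          simp only [List.cons_append, List.tail_cons] at hw
          rcases List.mem_append.mp hw with h' | h'
          · exact hpnotvh a b h w h'
          · simp only [List.mem_singleton] at h'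
            exact h' ▸ hβne b hb
        · rw [he]
          exact hn1.map Subtype.val_injective
  · -- avoid range
    intro a b h x hx ⟨z, hz⟩
    have hz' : β' z = x := hz
    rcases interp a b h x hx with ⟨w, hw, he⟩ | ⟨hbb, hh, hxin⟩ | ⟨haa, hxout⟩
    · -- x is an old internal vertex, so x ∈ Y
      have hxY : x ∈ Y := he ▸ hpY a b h w hw
      by_cases hzb : z = b₀
      · rw [hzb, hβ'b₀] at hz'
        exact hcY (hz' ▸ hxY)
      · rw [hβ'ne z hzb] at hz'
        refine havoid a b h w hw ⟨z, ?_⟩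
        exact Subtype.val_injective (hz'.trans he.symm)
    · -- x ∈ Rin, so x ∈ X
      have hxX : x ∈ X := hRinX a hh x hxin
      by_cases hzb : z = b₀
      · rw [hzb, hβ'b₀] at hz'
        exact hRinc a hh (hz' ▸ hxin)
      · rw [hβ'ne z hzb] at hz'
        exact hXY.ne_of_mem hxX (hz' ▸ hβY z hzb) rfl
    · -- x ∈ Rout
      by_cases hzb : z = b₀
      · rw [hzb, hβ'b₀] at hz'
        exact hcRout (hz' ▸ hxout)
      · rw [hβ'ne z hzb] at hz'
        rcases hRoutMem x hxout with h' | h'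
        · exact hXY.ne_of_mem h' (hz' ▸ hβY z hzb) rfl
        · exact hvY (h' ▸ hz' ▸ hβY z hzb)
  · -- cross-disjointness
    intro a b h a' b' h' hne x hx hx'
    rcases interp a b h x hx with ⟨w, hw, he⟩ | ⟨hbb, hh, hxin⟩ | ⟨haa, hxout⟩ <;>
      rcases interp a' b' h' x hx' with ⟨w', hw', he'⟩ | ⟨hbb', hh', hxin'⟩ | ⟨haa', hxout'⟩
    · refine hdisj a b h a' b' h' hne w hw ?_
      exact Subtype.val_injective (he.trans he'.symm) ▸ hw'
    · exact hXY.ne_of_mem (hRinX a' hh' x hxin') (he ▸ hpY a b h w hw) rfl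
    · have hxY : x ∈ Y := he ▸ hpY a b h w hw
      exact Y_not_XV hXY hvY hxY (hRoutMem x hxout')
    · exact hXY.ne_of_mem (hRinX a hh x hxin) (he' ▸ hpY a' b' h' w' hw') rfl
    · -- both in Rin: a ≠ a'
      subst hbb; subst hbb'
      have hane : a ≠ a' := fun e => hne (by rw [e])
      exact hRinDisj a hh a' hh' hane x hxin hxin'
    · exact hRoutRin a hh x hxin hxout'
    · have hxY : x ∈ Y := he' ▸ hpY a' b' h' w' hw'
      exact Y_not_XV hXY hvY hxY (hRoutMem x hxout)
    · exact hRoutRin a' hh' x hxin' hxout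
    · -- both in Rout: impossible since distinct out-arcs
      subst haa; subst haa'
      have hbne : b ≠ b' := fun e => hne (by rw [e])
      have hRoutne : Rout ≠ [] := List.ne_nil_of_mem hxout
      exact hbne (hout hRoutne b b' h h')

end Star
section C3sec

variable {γ : Type} {D : Digraph' V} {v : V} {X Y : Set V}

lemma v_mem_of_getLast? {l : List V} (h : l.getLast? = some v) : v ∈ l := by
  have hne : l ≠ [] := getLast?_ne_nil h
  have : l.getLast hne = v := by
    rw [List.getLast?_eq_getLast hne] at h
    exact Option.some_inj.mp h
  exact this ▸ List.getLast_mem hne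

lemma not_mem_dropLast_of_nodup {l : List V} (hnd : l.Nodup)
    (h : l.getLast? = some v) : v ∉ l.dropLast := by
  have hne : l ≠ [] := getLast?_ne_nil h
  have hv : l.getLast hne = v := by
    rw [List.getLast?_eq_getLast hne] at h
    exact Option.some_inj.mp h
  have hstr : l = l.dropLast ++ [v] := by
    conv_lhs => rw [← List.dropLast_append_getLast hne, hv]
  rw [hstr, List.nodup_append] at hnd
  intro hmem
  exact hnd.2.2 _ hmem _ (by simp) rfl

lemma split_first_mem {α : Type} (P : List α) :
    ∀ (Q : List α), (∃ q ∈ Q, q ∈ P) →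
      ∃ Q1 c Q2, Q = Q1 ++ c :: Q2 ∧ c ∈ P ∧ ∀ w ∈ Q1, w ∉ P := by
  classical
  intro Q
  induction Q with
  | nil => rintro ⟨q, hq, -⟩; simp at hq
  | cons q t ih =>
    intro hex
    by_cases hq : q ∈ P
    · exact ⟨[], q, t, by simp, hq, by simp⟩
    · obtain ⟨q', hq', hq'P⟩ := hex
      have hq't : q' ∈ t := by
        rcases List.mem_cons.mp hq' with h | h
        · exact absurd (h ▸ hq'P) hq
        · exact h
      obtain ⟨Q1, c, Q2, he, hcP, hQ1⟩ := ih ⟨q', hq't, hq'P⟩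
      refine ⟨q :: Q1, c, Q2, by rw [List.cons_append, he], hcP, ?_⟩
      intro w hw
      rcases List.mem_cons.mp hw with h | h
      · exact h ▸ hq
      · exact hQ1 w h

lemma C3 [Fintype γ] (hDs : D.StronglyConnected) (hvX : v ∉ X) (hvY : v ∉ Y)
    (hpart : X ∪ Y = {v}ᶜ) (hXY : Disjoint X Y)
    (hnoarc : ∀ x ∈ X, ∀ y ∈ Y, ¬ D.Adj x y)
    {F : Digraph' γ} (hF : IsCubicOrientation F) (hsf : ∀ a, ∃ b, F.Adj a b)
    (β : γ → ↥(Y ∪ {v} : Set V)) (p : ∀ a b, F.Adj a b → List ↥(Y ∪ {v} : Set V))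
    (hinj : Function.Injective β)
    (hpath : ∀ a b (h : F.Adj a b), (D2 D v X Y).IsDipath (β a) (p a b h) (β b))
    (havoid : ∀ a b (h : F.Adj a b) (x : ↥(Y ∪ {v} : Set V)),
      x ∈ p a b h → x ∉ Set.range β)
    (hdisj : ∀ a b (h : F.Adj a b) (a' b' : γ) (h' : F.Adj a' b'),
      (a, b) ≠ (a', b') → ∀ x, x ∈ p a b h → x ∉ p a' b' h')
    (b₀ : γ) (hb₀ : β b₀ = vhat v Y) :
    D.ContainsSubdivision F := by
  classical
  obtain ⟨hFloop, hdigon, hdeg⟩ := hF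
  set vh : ↥(Y ∪ {v} : Set V) := vhat v Y with hvhdef
  -- the last vertex before v̂ on an in-path
  have hu_adj : ∀ a (h : F.Adj a b₀),
      (D2 D v X Y).Adj ((β a :: p a b₀ h).getLast (by simp)) vh := by
    intro a h
    obtain ⟨hc, -⟩ := hpath a b₀ h
    rw [hb₀] at hc
    have hsplit : (β a :: p a b₀ h) ++ [vh] = β a :: p a b₀ h ++ [vh] := by simp
    rw [← hsplit] at hc
    obtain ⟨-, -, hlink⟩ := List.isChain_append.mp hc
    exact hlink _ rfl vh rfl
  have hune : ∀ a (h : F.Adj a b₀), (β a :: p a b₀ h).getLast (by simp) ≠ vh := by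
    intro a h he
    have hmem := List.getLast_mem (l := β a :: p a b₀ h) (by simp)
    rw [he] at hmem
    rcases List.mem_cons.mp hmem with h' | h'
    · exact hFloop b₀ ((hinj (hb₀.trans h')) ▸ h)
    · exact havoid a b₀ h vh h' ⟨b₀, hb₀⟩
  -- out-arc uniqueness if there are two in-arcs
  have hcard : ∀ (a₁ a₂ : γ), a₁ ≠ a₂ → F.Adj a₁ b₀ → F.Adj a₂ b₀ →
      (∀ a, F.Adj a b₀ → a = a₁ ∨ a = a₂) ∧
        (∀ b b', F.Adj b₀ b → F.Adj b₀ b' → b = b') := by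
    intro a₁ a₂ hne h₁ h₂
    set A : Set γ := {w | F.Adj b₀ w} with hAdef
    set B : Set γ := {w | F.Adj w b₀} with hBdef
    have hdisjAB : Disjoint A B := by
      rw [Set.disjoint_left]
      intro x hxA hxB
      exact hdigon b₀ x ⟨hxA, hxB⟩
    have hsum : A.ncard + B.ncard = 3 := by
      rw [← Set.ncard_union_eq hdisjAB (Set.toFinite A) (Set.toFinite B)]
      exact hdeg b₀
    have hBtwo : 2 ≤ B.ncard := by
      have hsub : ({a₁, a₂} : Set γ) ⊆ B := by
        intro x hx
        rcases hx with h | h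
        · exact h ▸ h₁
        · exact h ▸ h₂
      calc 2 = ({a₁, a₂} : Set γ).ncard := (Set.ncard_pair hne).symm
        _ ≤ B.ncard := Set.ncard_le_ncard hsub (Set.toFinite B)
    have hAone : 1 ≤ A.ncard := by
      obtain ⟨b, hb⟩ := hsf b₀
      have : A.Nonempty := ⟨b, hb⟩
      exact (Set.ncard_pos (Set.toFinite A)).mpr this
    have hA1 : A.ncard = 1 := by omega
    have hB2 : B.ncard = 2 := by omega
    constructor
    · intro a ha
      have hBeq : ({a₁, a₂} : Set γ) = B := by
        refine Set.eq_of_subset_of_ncard_le ?_ ?_ (Set.toFinite B)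
        · intro x hx
          rcases hx with h | h
          · exact h ▸ h₁
          · exact h ▸ h₂
        · rw [hB2, Set.ncard_pair hne]
      have : a ∈ B := ha
      rw [← hBeq] at this
      rcases this with h | h
      · exact Or.inl h
      · exact Or.inr h
    · intro b b' hb hb'
      obtain ⟨a, ha⟩ := Set.ncard_eq_one.mp hA1
      have h1 : b ∈ ({a} : Set γ) := ha ▸ hb
      have h2 : b' ∈ ({a} : Set γ) := ha ▸ hb'
      simp only [Set.mem_singleton_iff] at h1 h2
      exact h1.trans h2.symm
  by_cases hIn1 : ∃ a, F.Adj a b₀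
  case neg =>
    -- no in-arcs at all
    refine Lstar hvY hXY hFloop β p hinj hpath havoid hdisj b₀ hb₀ v (Or.inr rfl)
      (fun a h => []) [] ?_ ?_ ?_ ?_ ?_ ?_ ?_ ?_ ?_ ?_ ?_
    · intro a h; exact absurd ⟨a, h⟩ hIn1
    · intro a h; exact absurd ⟨a, h⟩ hIn1
    · intro a h; exact absurd ⟨a, h⟩ hIn1
    · intro a h; exact absurd ⟨a, h⟩ hIn1
    · intro a h; exact absurd ⟨a, h⟩ hIn1
    · exact List.isChain_singleton v
    · simp
    · exact List.nodup_singleton v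
    · simp
    · intro a h; exact absurd ⟨a, h⟩ hIn1
    · intro h; exact absurd rfl h
  case pos =>
  obtain ⟨a₁, h₁⟩ := hIn1
  by_cases hIn2 : ∃ a, F.Adj a b₀ ∧ a ≠ a₁
  case neg =>
    -- exactly one in-arc
    have huniq : ∀ a, F.Adj a b₀ → a = a₁ := by
      intro a ha
      by_contra hne
      exact hIn2 ⟨a, ha, hne⟩
    obtain ⟨R, hRne, hRch, hRnd, hRlast, hRX⟩ :=
      exists_repl hDs hvX hvY hpart hnoarc hXY (hu_adj a₁ h₁) (hune a₁ h₁)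
    have hRstr : R.dropLast ++ [v] = R := by
      have hne : R ≠ [] := hRne
      have : R.getLast hne = v := by
        rw [List.getLast?_eq_getLast hne] at hRlast
        exact Option.some_inj.mp hRlast
      rw [← this]
      exact List.dropLast_append_getLast hne
    refine Lstar hvY hXY hFloop β p hinj hpath havoid hdisj b₀ hb₀ v (Or.inr rfl)
      (fun a h => R.dropLast) [] ?_ ?_ ?_ ?_ ?_ ?_ ?_ ?_ ?_ ?_ ?_
    · intro a h w hw; exact hRX w hw
    · intro a h
      have ha : a = a₁ := huniq a h
      subst ha
      rw [hRstr]
      exact hRch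
    · intro a h; exact (List.nodup_cons.mp hRnd).2.sublist (List.dropLast_sublist R)
    · intro a h
      exact not_mem_dropLast_of_nodup (List.nodup_cons.mp hRnd).2 hRlast
    · intro a h a' h' hne
      exact absurd ((huniq a h).trans (huniq a' h').symm) hne
    · exact List.isChain_singleton v
    · simp
    · exact List.nodup_singleton v
    · simp
    · intro a h w hw
      simp
    · intro h; exact absurd rfl h
  case pos =>
  obtain ⟨a₂, h₂, hne21⟩ := hIn2
  have hne12 : a₁ ≠ a₂ := hne21.symm
  obtain ⟨hIn, hOut⟩ := hcard a₁ a₂ hne12 h₁ h₂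
  obtain ⟨R₁, hR₁ne, hR₁ch, hR₁nd, hR₁last, hR₁X⟩ :=
    exists_repl hDs hvX hvY hpart hnoarc hXY (hu_adj a₁ h₁) (hune a₁ h₁)
  obtain ⟨R₂, hR₂ne, hR₂ch, hR₂nd, hR₂last, hR₂X⟩ :=
    exists_repl hDs hvX hvY hpart hnoarc hXY (hu_adj a₂ h₂) (hune a₂ h₂)
  have hR₁mem : ∀ w ∈ R₁, w ∈ X ∨ w = v := by
    intro w hw
    rcases mem_dropLast_or_getLast? hR₁last hw with h | h
    · exact Or.inl (hR₁X w h)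
    · exact Or.inr h
  have hR₂mem : ∀ w ∈ R₂, w ∈ X ∨ w = v := by
    intro w hw
    rcases mem_dropLast_or_getLast? hR₂last hw with h | h
    · exact Or.inl (hR₂X w h)
    · exact Or.inr h
  -- split R₂ at its first intersection with R₁
  obtain ⟨Q1, c, Q2, hQsplit, hcR₁, hQ1⟩ :=
    split_first_mem R₁ R₂ ⟨v, v_mem_of_getLast? hR₂last, v_mem_of_getLast? hR₁last⟩
  obtain ⟨P1, P2, hPsplit⟩ := List.append_of_mem hcR₁
  have hnd₁ : R₁.Nodup := (List.nodup_cons.mp hR₁nd).2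
  have hnd₂ : R₂.Nodup := (List.nodup_cons.mp hR₂nd).2
  have hndP : (P1 ++ c :: P2).Nodup := hPsplit ▸ hnd₁
  have hndQ : (Q1 ++ c :: Q2).Nodup := hQsplit ▸ hnd₂
  have hP1disj : ∀ w ∈ P1, w ∉ c :: P2 := fun w hw hw' => (List.nodup_append.mp hndP).2.2 w hw w hw' rfl
  have hcP1 : c ∉ P1 := fun h => hP1disj c h (by simp)
  have hcQ1 : c ∉ Q1 := fun h => hQ1 c h hcR₁
  have hlastCP : (c :: P2).getLast? = some v := by
    have h' := hR₁last
    rw [hPsplit, List.getLast?_append,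
      List.getLast?_eq_getLast (by simp : (c :: P2) ≠ [])] at h'
    rw [List.getLast?_eq_getLast (by simp : (c :: P2) ≠ [])]
    exact h'
  have hvP1 : v ∉ P1 := by
    intro h
    exact hP1disj v h (v_mem_of_getLast? hlastCP)
  have hP1X : ∀ w ∈ P1, w ∈ X := by
    intro w hw
    rcases hR₁mem w (hPsplit ▸ List.mem_append.mpr (Or.inl hw)) with h | h
    · exact h
    · exact absurd (h ▸ hw) hvP1
  have hQ1X : ∀ w ∈ Q1, w ∈ X := by
    intro w hw
    rcases hR₂mem w (hQsplit ▸ List.mem_append.mpr (Or.inl hw)) with h | h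
    · exact h
    · exact absurd (v_mem_of_getLast? hR₁last) (h ▸ hQ1 w hw)
  refine Lstar hvY hXY hFloop β p hinj hpath havoid hdisj b₀ hb₀ c
    (hR₁mem c hcR₁) (fun a h => if a = a₁ then P1 else Q1) P2
    ?_ ?_ ?_ ?_ ?_ ?_ ?_ ?_ ?_ ?_ ?_
  · intro a h w hw
    beta_reduce at hw
    split_ifs at hw with ha
    · exact hP1X w hw
    · exact hQ1X w hw
  · intro a h
    beta_reduce
    split_ifs with ha
    · subst ha
      refine hR₁ch.prefix ?_
      rw [hPsplit]
      refine ⟨P2, ?_⟩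
      simp
    · have ha2 : a = a₂ := (hIn a h).resolve_left ha
      subst ha2
      refine hR₂ch.prefix ?_
      rw [hQsplit]
      refine ⟨Q2, ?_⟩
      simp
  · intro a h
    beta_reduce
    split_ifs with ha
    · exact (List.nodup_append.mp hndP).1
    · exact (List.nodup_append.mp hndQ).1
  · intro a h
    beta_reduce
    split_ifs with ha
    · exact hcP1
    · exact hcQ1
  · intro a h a' h' hanene w hw hw'
    beta_reduce at hw hw'
    split_ifs at hw with ha <;> split_ifs at hw' with ha'
    · exact hanene (ha.trans ha'.symm)
    · exact hQ1 w hw' (hPsplit ▸ List.mem_append.mpr (Or.inl hw))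
    · exact hQ1 w hw (hPsplit ▸ List.mem_append.mpr (Or.inl hw'))
    · have h2a : a = a₂ := (hIn a h).resolve_left ha
      have h2a' : a' = a₂ := (hIn a' h').resolve_left ha'
      exact hanene (h2a.trans h2a'.symm)
  · -- Rout chain
    refine hR₁ch.suffix ?_
    rw [hPsplit]
    exact ⟨(((β a₁ :: p a₁ b₀ h₁).getLast (by simp)).1) :: P1, by simp⟩
  · exact hlastCP
  · exact hndP.sublist (List.sublist_append_right _ _)
  · intro w hw
    exact hR₁mem w (hPsplit ▸ List.mem_append.mpr (Or.inr (List.mem_cons_of_mem _ hw)))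
  · intro a h w hw
    beta_reduce at hw
    split_ifs at hw with ha
    · intro hw'
      exact hP1disj w hw (List.mem_cons_of_mem _ hw')
    · intro hw'
      exact hQ1 w hw (hPsplit ▸ List.mem_append.mpr (Or.inr (List.mem_cons_of_mem _ hw')))
  · intro _
    exact hOut

end C3sec
section Assemble

variable {γ : Type} {D : Digraph' V} {v : V} {X Y : Set V}

lemma part1_D1 {S : Set V} {F : Digraph' γ} :
    (D.induce S).ContainsSubdivision F → D.ContainsSubdivision F := by
  rintro ⟨β, p, hinj, hpath, havoid, hdisj⟩
  refine push_chains Subtype.val Subtype.val_injective β p hinj ?_ havoid hdisj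
  intro a b h
  obtain ⟨hc, hn⟩ := hpath a b h
  exact ⟨hc, hn⟩

lemma part1_D2 [Fintype γ] (hDs : D.StronglyConnected) (hvX : v ∉ X) (hvY : v ∉ Y)
    (hpart : X ∪ Y = {v}ᶜ) (hXY : Disjoint X Y)
    (hnoarc : ∀ x ∈ X, ∀ y ∈ Y, ¬ D.Adj x y)
    {F : Digraph' γ} (hF : IsCubicOrientation F) (hsf : ∀ a, ∃ b, F.Adj a b) :
    (D2 D v X Y).ContainsSubdivision F → D.ContainsSubdivision F := by
  rintro ⟨β, p, hinj, hpath, havoid, hdisj⟩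
  by_cases hβ : ∃ b₀, β b₀ = vhat v Y
  · obtain ⟨b₀, hb₀⟩ := hβ
    exact C3 hDs hvX hvY hpart hXY hnoarc hF hsf β p hinj hpath havoid hdisj b₀ hb₀
  · by_cases hp : ∃ a₀, ∃ b₀, ∃ h₀ : F.Adj a₀ b₀, vhat v Y ∈ p a₀ b₀ h₀
    · obtain ⟨a₀, b₀, h₀, hm⟩ := hp
      exact Lmid hDs hvX hvY hpart hXY hnoarc β p hinj hpath havoid hdisj a₀ b₀ h₀ hm
    · refine push_chains Subtype.val Subtype.val_injective β p hinj ?_ havoid hdisj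
      intro a b h
      obtain ⟨hc, hn⟩ := hpath a b h
      refine ⟨?_, hn⟩
      refine chainD_of_chainD2 hvY _ hc ?_
      intro w hw
      simp only [List.cons_append, List.tail_cons] at hw
      rcases List.mem_append.mp hw with h' | h'
      · intro he
        exact hp ⟨a, b, h, he ▸ h'⟩
      · simp only [List.mem_singleton] at h'
        intro he
        exact hβ ⟨b, h' ▸ he⟩

end Assemble
end SepRed

/-- Let `D` be strongly connected, `v` a vertex, and `(X,Y)`
a partition of `V(D) \ {v}` into nonempty sets with no arc from `X` to `Y`
and with `D[X]` strongly connected. Let `D₁ := D[X ∪ {v}]`, and let `D₂` have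
vertex set `Y ∪ {v}` and the arcs of `D[Y ∪ {v}]` together with an arc `(y,v)`
for every `y ∈ Y` with an out-neighbor in `X`. If `F` is a sink-free
orientation of a cubic graph then: (1) if `D₁` or `D₂` contains a subdivision
of `F`, so does `D`; (2) `χ⃗(D) ≤ max(χ⃗(D₁), χ⃗(D₂))`. -/
theorem separation_reduction {V γ : Type} [Fintype V] [Fintype γ]
    (D : Digraph' V) (hD : D.Loopless) (hDs : D.StronglyConnected)
    (v : V) (X Y : Set V)
    (hpart : X ∪ Y = {v}ᶜ) (hXY : Disjoint X Y)
    (hXne : X.Nonempty) (hYne : Y.Nonempty)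
    (hnoarc : ∀ x ∈ X, ∀ y ∈ Y, ¬ D.Adj x y)
    (hXstrong : (D.induce X).StronglyConnected)
    (F : Digraph' γ) (hF : IsCubicOrientation F) (hsf : ∀ a, ∃ b, F.Adj a b) :
    let D₁ := D.induce (X ∪ {v})
    let D₂ : Digraph' ↥(Y ∪ {v} : Set V) :=
      ⟨fun a b => D.Adj a.1 b.1 ∨ (a.1 ∈ Y ∧ b.1 = v ∧ ∃ x ∈ X, D.Adj a.1 x)⟩
    ((D₁.ContainsSubdivision F ∨ D₂.ContainsSubdivision F) → D.ContainsSubdivision F) ∧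
      D.dichromaticNumber ≤ max D₁.dichromaticNumber D₂.dichromaticNumber := by
  intro D₁ D₂
  have hvX : v ∉ X := by
    intro h
    have : v ∈ ({v}ᶜ : Set V) := hpart ▸ Set.mem_union_left _ h
    simp at this
  have hvY : v ∉ Y := by
    intro h
    have : v ∈ ({v}ᶜ : Set V) := hpart ▸ Set.mem_union_right _ h
    simp at this
  constructor
  · rintro (h | h)
    · exact SepRed.part1_D1 h
    · exact SepRed.part1_D2 hDs hvX hvY hpart hXY hnoarc hF hsf h
  · exact SepRed.part2 D hD v X Y hpart hXY hnoarc
end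

section
/- Every octus is a subdigraph of a maximal octus, where a maximal octus is a digraph obtainable from K₁ by a sequence of ear additions only. -/
/-- The arc set `E` is an orientation of the undirected path whose vertex
sequence is the (nodup) list `l`: for each pair of consecutive vertices of `l`,
exactly one of the two possible arcs belongs to `E`, and `E` contains nothing else. -/
def IsPathOrientation (l : List ℕ) (E : Finset (ℕ × ℕ)) : Prop :=
  (∀ e ∈ E, e ∈ l.zip l.tail ∨ e.swap ∈ l.zip l.tail) ∧
  (∀ p ∈ l.zip l.tail, (p ∈ E ∨ p.swap ∈ E) ∧ ¬ (p ∈ E ∧ p.swap ∈ E))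

/-- The class of octi, as digraphs presented by a finite vertex set `Vs ⊆ ℕ`
together with a finite arc set `As`:
* the single vertex `K₁` is an octus;
* ear addition: given an octus `F`, a vertex `v₀` of `F` and an orientation of
  a path `v₁, …, v_k` (`k ≥ 1`, given by the nonempty nodup list `l` disjoint
  from `F`, with arc set `E`), adding the path, both arcs `(v₀,v₁)`, `(v₁,v₀)`
  and exactly one of the arcs `(v₀,v_k)`, `(v_k,v₀)` yields an octus;
* every subdigraph of an octus is an octus. -/
inductive IsOctus : Finset ℕ → Finset (ℕ × ℕ) → Prop
  | single (v : ℕ) : IsOctus {v} ∅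
  | ear (Vs : Finset ℕ) (As : Finset (ℕ × ℕ)) (v0 : ℕ) (l : List ℕ)
      (E : Finset (ℕ × ℕ)) (e : ℕ × ℕ)
      (hoct : IsOctus Vs As) (hv0 : v0 ∈ Vs)
      (hne : l ≠ []) (hnd : l.Nodup) (hdisj : ∀ x ∈ l, x ∉ Vs)
      (hE : IsPathOrientation l E)
      (he : e = (v0, l.getLast hne) ∨ e = (l.getLast hne, v0)) :
      IsOctus (Vs ∪ l.toFinset)
        (As ∪ E ∪ {(v0, l.head hne), (l.head hne, v0), e})
  | subdigraph (Vs As Vs' As') (hoct : IsOctus Vs As) (hV : Vs' ⊆ Vs) (hA : As' ⊆ As)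
      (hsupp : ∀ a ∈ As', a.1 ∈ Vs' ∧ a.2 ∈ Vs') : IsOctus Vs' As'

/-- A maximal octus: a digraph obtainable from `K₁` by ear additions only. -/
inductive IsMaximalOctus : Finset ℕ → Finset (ℕ × ℕ) → Prop
  | single (v : ℕ) : IsMaximalOctus {v} ∅
  | ear (Vs : Finset ℕ) (As : Finset (ℕ × ℕ)) (v0 : ℕ) (l : List ℕ)
      (E : Finset (ℕ × ℕ)) (e : ℕ × ℕ)
      (hoct : IsMaximalOctus Vs As) (hv0 : v0 ∈ Vs)
      (hne : l ≠ []) (hnd : l.Nodup) (hdisj : ∀ x ∈ l, x ∉ Vs)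
      (hE : IsPathOrientation l E)
      (he : e = (v0, l.getLast hne) ∨ e = (l.getLast hne, v0)) :
      IsMaximalOctus (Vs ∪ l.toFinset)
        (As ∪ E ∪ {(v0, l.head hne), (l.head hne, v0), e})

/-- The digraph (on the vertex subtype `{x // x ∈ Vs}`) presented by the
vertex set `Vs` and the arc set `As`. -/
def toDigraph (Vs : Finset ℕ) (As : Finset (ℕ × ℕ)) : Digraph' {x : ℕ // x ∈ Vs} :=
  ⟨fun a b => ((a : ℕ), (b : ℕ)) ∈ As⟩
section Aux

private lemma mem_zip_tail {l : List ℕ} {p : ℕ × ℕ} (hp : p ∈ l.zip l.tail) :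
    p.1 ∈ l ∧ p.2 ∈ l := by
  obtain ⟨a, b⟩ := p
  obtain ⟨h1, h2⟩ := List.of_mem_zip hp
  exact ⟨h1, List.mem_of_mem_tail h2⟩

private lemma octus_supp {Vs : Finset ℕ} {As : Finset (ℕ × ℕ)} (h : IsOctus Vs As) :
    ∀ a ∈ As, a.1 ∈ Vs ∧ a.2 ∈ Vs := by
  induction h with
  | single v => simp
  | ear Vs As v0 l E e hoct hv0 hne hnd hdisj hE he ih =>
      intro a ha
      simp only [Finset.mem_union, Finset.mem_insert, Finset.mem_singleton] at ha ⊢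
      rcases ha with (ha | ha) | ha
      · exact ⟨Or.inl (ih a ha).1, Or.inl (ih a ha).2⟩
      · rcases (hE.1 a ha) with hz | hz
        · obtain ⟨h1, h2⟩ := mem_zip_tail hz
          exact ⟨Or.inr (List.mem_toFinset.2 h1), Or.inr (List.mem_toFinset.2 h2)⟩
        · obtain ⟨h1, h2⟩ := mem_zip_tail hz
          exact ⟨Or.inr (List.mem_toFinset.2 h2), Or.inr (List.mem_toFinset.2 h1)⟩
      · have hh : l.head hne ∈ l := List.head_mem hne
        have hg : l.getLast hne ∈ l := List.getLast_mem hne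
        rcases ha with rfl | rfl | rfl
        · exact ⟨Or.inl hv0, Or.inr (List.mem_toFinset.2 hh)⟩
        · exact ⟨Or.inr (List.mem_toFinset.2 hh), Or.inl hv0⟩
        · rcases he with rfl | rfl
          · exact ⟨Or.inl hv0, Or.inr (List.mem_toFinset.2 hg)⟩
          · exact ⟨Or.inr (List.mem_toFinset.2 hg), Or.inl hv0⟩
  | subdigraph Vs As Vs' As' hoct hV hA hsupp ih => exact hsupp

private lemma mem_image_inj {f : ℕ → ℕ} (hf : Function.Injective f) {s : Finset ℕ} {a : ℕ} :
    f a ∈ s.image f ↔ a ∈ s := by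
  constructor
  · intro h
    obtain ⟨b, hb, hfb⟩ := Finset.mem_image.1 h
    exact hf hfb ▸ hb
  · exact fun h => Finset.mem_image_of_mem f h

private lemma mem_image_injP {f : ℕ → ℕ} (hf : Function.Injective (Prod.map f f))
    {s : Finset (ℕ × ℕ)} {a : ℕ × ℕ} :
    Prod.map f f a ∈ s.image (Prod.map f f) ↔ a ∈ s := by
  constructor
  · intro h
    obtain ⟨b, hb, hfb⟩ := Finset.mem_image.1 h
    exact hf hfb ▸ hb
  · exact fun h => Finset.mem_image_of_mem _ h

private lemma pathOrientation_map {l : List ℕ} {E : Finset (ℕ × ℕ)} {f : ℕ → ℕ}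
    (hf : Function.Injective f) (hE : IsPathOrientation l E) :
    IsPathOrientation (l.map f) (E.image (Prod.map f f)) := by
  have hFinj : Function.Injective (Prod.map f f) := Prod.map_injective.2 ⟨hf, hf⟩
  have hzip : (l.map f).zip (l.map f).tail = (l.zip l.tail).map (Prod.map f f) := by
    rw [← List.map_tail, List.zip_map]
  have hswap : ∀ p : ℕ × ℕ, (Prod.map f f p).swap = Prod.map f f p.swap := fun p => rfl
  constructor
  · intro e' he'
    obtain ⟨e, heE, rfl⟩ := Finset.mem_image.1 he'
    rcases hE.1 e heE with hz | hz
    · exact Or.inl (hzip ▸ List.mem_map_of_mem (f := Prod.map f f) hz)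
    · exact Or.inr (by rw [hswap, hzip]; exact List.mem_map_of_mem (f := Prod.map f f) hz)
  · intro p' hp'
    rw [hzip] at hp'
    obtain ⟨p, hp, rfl⟩ := List.mem_map.1 hp'
    obtain ⟨h1, h2⟩ := hE.2 p hp
    constructor
    · rcases h1 with h | h
      · exact Or.inl (Finset.mem_image_of_mem _ h)
      · exact Or.inr (by rw [hswap]; exact Finset.mem_image_of_mem _ h)
    · rintro ⟨ha, hb⟩
      rw [hswap] at hb
      exact h2 ⟨(mem_image_injP hFinj).1 ha, (mem_image_injP hFinj).1 hb⟩

private lemma maxOctus_map {Vs : Finset ℕ} {As : Finset (ℕ × ℕ)} {f : ℕ → ℕ}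
    (hf : Function.Injective f) (h : IsMaximalOctus Vs As) :
    IsMaximalOctus (Vs.image f) (As.image (Prod.map f f)) := by
  have hFinj : Function.Injective (Prod.map f f) := Prod.map_injective.2 ⟨hf, hf⟩
  induction h with
  | single v => simpa using IsMaximalOctus.single (f v)
  | ear Vs As v0 l E e hoct hv0 hne hnd hdisj hE he ih =>
      have hne' : l.map f ≠ [] := by simpa using hne
      have hhead : (l.map f).head hne' = f (l.head hne) := List.head_map hne'
      have hlast : (l.map f).getLast hne' = f (l.getLast hne) := List.getLast_map hne'
      have hres := IsMaximalOctus.ear (Vs.image f) (As.image (Prod.map f f)) (f v0)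
        (l.map f) (E.image (Prod.map f f)) (Prod.map f f e) ih
        (Finset.mem_image_of_mem f hv0) hne' (hnd.map hf)
        (by
          intro x hx
          obtain ⟨y, hy, rfl⟩ := List.mem_map.1 hx
          intro hmem
          exact hdisj y hy ((mem_image_inj hf).1 hmem))
        (pathOrientation_map hf hE)
        (by
          rcases he with rfl | rfl
          · exact Or.inl (by rw [hlast]; rfl)
          · exact Or.inr (by rw [hlast]; rfl))
      have hV : (Vs ∪ l.toFinset).image f = Vs.image f ∪ (l.map f).toFinset := by
        ext x; simp only [Finset.mem_image, Finset.mem_union, List.mem_toFinset,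
          List.mem_map]
        constructor
        · rintro ⟨a, (h | h), rfl⟩
          · exact Or.inl ⟨a, h, rfl⟩
          · exact Or.inr ⟨a, h, rfl⟩
        · rintro (⟨a, h, rfl⟩ | ⟨a, h, rfl⟩)
          · exact ⟨a, Or.inl h, rfl⟩
          · exact ⟨a, Or.inr h, rfl⟩
      have hA : (As ∪ E ∪ {(v0, l.head hne), (l.head hne, v0), e}).image (Prod.map f f)
          = As.image (Prod.map f f) ∪ E.image (Prod.map f f) ∪
            {(f v0, (l.map f).head hne'), ((l.map f).head hne', f v0), Prod.map f f e} := by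
        rw [Finset.image_union, Finset.image_union, hhead]
        congr 1
        rw [show ({(v0, l.head hne), (l.head hne, v0), e} : Finset (ℕ × ℕ))
          = insert (v0, l.head hne) (insert (l.head hne, v0) {e}) from rfl,
          Finset.image_insert, Finset.image_insert, Finset.image_singleton]
        rfl
      rw [hV, hA]
      exact hres

end Aux

/-- Every octus is a subdigraph of a maximal octus. -/
theorem octus_sub_maximal (Vs : Finset ℕ) (As : Finset (ℕ × ℕ)) (h : IsOctus Vs As) :
    ∃ (Vs' : Finset ℕ) (As' : Finset (ℕ × ℕ)),
      IsMaximalOctus Vs' As' ∧ Vs ⊆ Vs' ∧ As ⊆ As' := by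
  induction h with
  | single v => exact ⟨{v}, ∅, IsMaximalOctus.single v, le_refl _, le_refl _⟩
  | subdigraph Vs As Vs' As' hoct hV hA hsupp ih =>
      obtain ⟨W, B, hmax, h1, h2⟩ := ih
      exact ⟨W, B, hmax, hV.trans h1, hA.trans h2⟩
  | ear Vs As v0 l E e hoct hv0 hne hnd hdisj hE he ih =>
      obtain ⟨W, B, hmax, hVW, hAB⟩ := ih
      set N := (Vs ∪ l.toFinset).sup id + 1 with hN
      set f : ℕ → ℕ := fun x => if x ∈ Vs then x else x + N with hfdef
      have hbound : ∀ x ∈ Vs ∪ l.toFinset, x < N := fun x hx =>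
        Nat.lt_succ_of_le (Finset.le_sup (f := id) hx)
      have hfix : ∀ x ∈ Vs, f x = x := fun x hx => if_pos hx
      have hf : Function.Injective f := by
        intro a b hab
        simp only [hfdef] at hab
        by_cases ha : a ∈ Vs <;> by_cases hb : b ∈ Vs <;>
          simp only [ha, hb, if_pos, if_neg, if_true, if_false] at hab
        · exact hab
        · have := hbound a (Finset.mem_union_left _ ha); omega
        · have := hbound b (Finset.mem_union_left _ hb); omega
        · omega
      have hFinj : Function.Injective (Prod.map f f) := Prod.map_injective.2 ⟨hf, hf⟩
      have hmax' := maxOctus_map hf hmax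
      have hv0' : v0 ∈ W.image f := by
        rw [← hfix v0 hv0]
        exact Finset.mem_image_of_mem f (hVW hv0)
      have hdisj' : ∀ x ∈ l, x ∉ W.image f := by
        intro x hx hmem
        obtain ⟨y, hy, hfy⟩ := Finset.mem_image.1 hmem
        by_cases hyV : y ∈ Vs
        · rw [hfix y hyV] at hfy
          exact hdisj x hx (hfy ▸ hyV)
        · have hxlt : x < N :=
            hbound x (Finset.mem_union_right _ (List.mem_toFinset.2 hx))
          have : f y = y + N := if_neg hyV
          omega
      refine ⟨W.image f ∪ l.toFinset,
        B.image (Prod.map f f) ∪ E ∪ {(v0, l.head hne), (l.head hne, v0), e},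
        IsMaximalOctus.ear _ _ v0 l E e hmax' hv0' hne hnd hdisj' hE he, ?_, ?_⟩
      · apply Finset.union_subset_union_left
        intro x hx
        rw [← hfix x hx]
        exact Finset.mem_image_of_mem f (hVW hx)
      · apply Finset.union_subset_union_left
        apply Finset.union_subset_union_left
        intro a ha
        obtain ⟨h1, h2⟩ := octus_supp hoct a ha
        have : Prod.map f f a = a := by
          obtain ⟨a1, a2⟩ := a
          simp only [Prod.map]
          rw [hfix a1 h1, hfix a2 h2]
        rw [← this]
        exact Finset.mem_image_of_mem _ (hAB ha)
end
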